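/- Let M=(I,V,E) be an iMAG and D⊆I∪V. Then for every isADMG A∈[M]_G there exists an iMAG M̃∈[M_{do(I_D)}]_M such that MAG(A_{do(I_D)}) is a subgraph of M̃ (its nodes and marked edges are among those of M̃). -/
import Mathlib


noncomputable section
open Classical

/-- Edge-endpoint marks: tail `−`, arrowhead `>`, or circle `∘`. -/
inductive Mark : Type
  | tail
  | arrow
  | circle
  deriving DecidableEq

/-- A mixed graph with input nodes over a node type `N`, as raw data.
`mark a b` is the mark at `a` on the (unique) edge between `a` and `b`,
or `none` if there is no edge between `a` and `b`. -/
structure MixedGraph (N : Type) where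
  inputs : Set N
  outputs : Set N
  mark : N → N → Option Mark

namespace MixedGraph

variable {N N' : Type}

/-- All nodes of the graph. -/
def nodes (G : MixedGraph N) : Set N := G.inputs ∪ G.outputs

/-- `a` and `b` are adjacent (joined by an edge). -/
def adj (G : MixedGraph N) (a b : N) : Prop := (G.mark a b).isSome

/-- Directed edge `a → b`: tail at `a`, arrowhead at `b`. -/
def dir (G : MixedGraph N) (a b : N) : Prop :=
  G.mark a b = some Mark.tail ∧ G.mark b a = some Mark.arrow

/-- Bidirected edge `a ↔ b`. -/
def bidir (G : MixedGraph N) (a b : N) : Prop :=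
  G.mark a b = some Mark.arrow ∧ G.mark b a = some Mark.arrow

/-- Undirected edge `a − b`. -/
def undir (G : MixedGraph N) (a b : N) : Prop :=
  G.mark a b = some Mark.tail ∧ G.mark b a = some Mark.tail

/-- Edge `a ∘→ b`: circle at `a`, arrowhead at `b`. -/
def circArrow (G : MixedGraph N) (a b : N) : Prop :=
  G.mark a b = some Mark.circle ∧ G.mark b a = some Mark.arrow

/-- Edge `a ∘−∘ b`: circles at both ends. -/
def circCirc (G : MixedGraph N) (a b : N) : Prop :=
  G.mark a b = some Mark.circle ∧ G.mark b a = some Mark.circle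

/-- Edge `a ∘− b`: circle at `a`, tail at `b`. -/
def circTail (G : MixedGraph N) (a b : N) : Prop :=
  G.mark a b = some Mark.circle ∧ G.mark b a = some Mark.tail

/-- Edge `a −∘ b`: tail at `a`, circle at `b`. -/
def tailCirc (G : MixedGraph N) (a b : N) : Prop :=
  G.mark a b = some Mark.tail ∧ G.mark b a = some Mark.circle

/-- Some edge of `G` carries an arrowhead at `a`. -/
def arrowAt (G : MixedGraph N) (a : N) : Prop :=
  ∃ b, G.mark a b = some Mark.arrow

/-- `a` is an ancestor of `b`: `a = b` or a directed path `a → ⋯ → b` exists. -/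
def anc (G : MixedGraph N) : N → N → Prop := Relation.ReflTransGen G.dir

/-- The ancestors of a set `S` of nodes. -/
def ancSet (G : MixedGraph N) (S : Set N) : Set N := {a | ∃ s ∈ S, G.anc a s}

/-- Potentially directed edge from `a` towards `b`: an edge with no arrowhead at its
earlier endpoint `a` and no tail at its later endpoint `b`. -/
def potDir (G : MixedGraph N) (a b : N) : Prop :=
  G.adj a b ∧ G.mark a b ≠ some Mark.arrow ∧ G.mark b a ≠ some Mark.tail

/-- `a` is a possible ancestor of `b`: `a = b` or a potentially directed path runs
from `a` to `b`. -/
def poAn (G : MixedGraph N) : N → N → Prop := Relation.ReflTransGen G.potDir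

/-- The possible ancestors of a set `S` of nodes. -/
def poAnSet (G : MixedGraph N) (S : Set N) : Set N := {a | ∃ s ∈ S, G.poAn a s}

/-- Well-formedness of a mixed graph with input nodes: inputs and outputs are disjoint
finite sets, edges are symmetric and irreflexive and join nodes of the graph. -/
def WF (G : MixedGraph N) : Prop :=
  Disjoint G.inputs G.outputs ∧ G.inputs.Finite ∧ G.outputs.Finite ∧
  (∀ a b, (G.mark a b).isSome → (G.mark b a).isSome) ∧
  (∀ a, G.mark a a = none) ∧
  (∀ a b, (G.mark a b).isSome → a ∈ G.nodes ∧ b ∈ G.nodes)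

/-- The induced subgraph of `G` over the node set `A`. -/
def induce (G : MixedGraph N) (A : Set N) : MixedGraph N where
  inputs := G.inputs ∩ A
  outputs := G.outputs ∩ A
  mark := fun a b => if a ∈ A ∧ b ∈ A then G.mark a b else none

/-- Transport a mixed graph over `N` to one over `N ⊕ N'` along `Sum.inl`. -/
def sumInl (G : MixedGraph N) : MixedGraph (N ⊕ N') where
  inputs := Sum.inl '' G.inputs
  outputs := Sum.inl '' G.outputs
  mark := fun x y =>
    match x, y with
    | Sum.inl a, Sum.inl b => G.mark a b
    | _, _ => none

/-- `G` is a subgraph of `H`: its nodes and marked edges are among those of `H`. -/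
def Subgraph (G H : MixedGraph N) : Prop :=
  G.inputs ⊆ H.inputs ∧ G.outputs ⊆ H.outputs ∧
  ∀ a b m, G.mark a b = some m → H.mark a b = some m

end MixedGraph

/-- A walk in `G` with `len` edges, visiting the nodes `f 0, …, f len`
(consecutive nodes are adjacent). -/
structure GWalk {N : Type} (G : MixedGraph N) where
  len : ℕ
  f : ℕ → N
  hadj : ∀ i < len, G.adj (f i) (f (i + 1))

namespace GWalk

variable {N : Type} {G : MixedGraph N}

/-- The first node of the walk. -/
def first (w : GWalk G) : N := w.f 0

/-- The last node of the walk. -/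
def last (w : GWalk G) : N := w.f w.len

/-- The walk is a path: no repeated nodes. -/
def IsPath (w : GWalk G) : Prop :=
  ∀ i ≤ w.len, ∀ j ≤ w.len, w.f i = w.f j → i = j

/-- The (interior) node at position `i` is a collider on the walk: both incident
edges carry arrowheads at it. -/
def ColliderAt (w : GWalk G) (i : ℕ) : Prop :=
  G.mark (w.f i) (w.f (i - 1)) = some Mark.arrow ∧
  G.mark (w.f i) (w.f (i + 1)) = some Mark.arrow

end GWalk

namespace MixedGraph

variable {N : Type}

/-- `w` is an `(L,S)`-inducing walk: every non-endnode is in `L` or a collider, and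
every collider lies in `Anc({first, last} ∪ S)`. -/
def InducingWalk (G : MixedGraph N) (L S : Set N) (w : GWalk G) : Prop :=
  (∀ i, 0 < i → i < w.len → w.f i ∈ L ∨ w.ColliderAt i) ∧
  (∀ i, 0 < i → i < w.len → w.ColliderAt i →
    w.f i ∈ G.ancSet ({w.first, w.last} ∪ S))

/-- There is an `(L,S)`-inducing walk from `a` to `b` in `G`. -/
def InducingWalkBtw (G : MixedGraph N) (L S : Set N) (a b : N) : Prop :=
  ∃ w : GWalk G, w.first = a ∧ w.last = b ∧ G.InducingWalk L S w

/-- There is an `(L,S)`-inducing path from `a` to `b` in `G`. -/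
def InducingPathBtw (G : MixedGraph N) (L S : Set N) (a b : N) : Prop :=
  ∃ w : GWalk G, w.IsPath ∧ w.first = a ∧ w.last = b ∧ G.InducingWalk L S w

/-- `G` is an iADMG: all edges directed or bidirected, no directed cycles, no
arrowheads at input nodes, and no edges between two input nodes. -/
def IsIADMG (G : MixedGraph N) : Prop :=
  G.WF ∧
  (∀ a b, G.adj a b → G.dir a b ∨ G.dir b a ∨ G.bidir a b) ∧
  (∀ a b, G.dir a b → ¬ G.anc b a) ∧
  (∀ a ∈ G.inputs, ∀ b, G.mark a b ≠ some Mark.arrow) ∧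
  (∀ a ∈ G.inputs, ∀ b ∈ G.inputs, ¬ G.adj a b)

/-- `G` is an iPAG. -/
def IsIPAG (G : MixedGraph N) : Prop :=
  G.WF ∧
  (∀ a ∈ G.inputs, ∀ b, G.mark a b ≠ some Mark.arrow) ∧
  (∀ a ∈ G.inputs, ∀ b ∈ G.inputs, ¬ G.adj a b) ∧
  (∀ a b, G.dir a b → ¬ G.anc b a) ∧
  (∀ a b, G.anc a b → ¬ G.bidir b a) ∧
  (∀ a b c, G.mark b a = some Mark.arrow → ¬ G.undir b c) ∧
  (∀ a b, a ≠ b → a ∈ G.nodes → b ∈ G.nodes → ¬ G.adj a b →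
    ¬ G.InducingPathBtw ∅ ∅ a b)

/-- `G` is an iMAG: an iPAG with no circle marks. -/
def IsIMAG (G : MixedGraph N) : Prop :=
  G.IsIPAG ∧ ∀ a b, G.mark a b ≠ some Mark.circle

/-- The visibility condition for a directed edge `a → b` of `G`: either `a` is an
input node, or some node `c` not adjacent to `b` satisfies `c *→ a`, or there is a
path `c *→ v₁ ↔ ⋯ ↔ v_{n−1} ↔ a` (`n ≥ 2`) with every `vᵢ` a parent of `b`. -/
def VisibleCond (G : MixedGraph N) (a b : N) : Prop :=
  a ∈ G.inputs ∨
  ∃ c, c ≠ b ∧ ¬ G.adj c b ∧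
    (G.mark a c = some Mark.arrow ∨
      ∃ w : GWalk G, w.IsPath ∧ 2 ≤ w.len ∧ w.first = c ∧ w.last = a ∧
        G.mark (w.f 1) (w.f 0) = some Mark.arrow ∧
        (∀ i, 1 ≤ i → i < w.len → G.bidir (w.f i) (w.f (i + 1))) ∧
        (∀ i, 1 ≤ i → i < w.len → G.dir (w.f i) b))

/-- `a → b` is a visible directed edge of `G`. -/
def VisibleDir (G : MixedGraph N) (a b : N) : Prop :=
  G.dir a b ∧ G.VisibleCond a b

/-- `a` and `b` are in the same bucket of `G`: some path between them carries no
arrowhead mark on any of its edges. -/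
def SameBucket (G : MixedGraph N) (a b : N) : Prop :=
  ∃ w : GWalk G, w.IsPath ∧ w.first = a ∧ w.last = b ∧
    ∀ i < w.len, G.mark (w.f i) (w.f (i + 1)) ≠ some Mark.arrow ∧
      G.mark (w.f (i + 1)) (w.f i) ≠ some Mark.arrow

end MixedGraph

/-- An isADMG: an iADMG together with its set `sel` of latent selection nodes.
The observed output nodes are `graph.outputs \ sel`. -/
structure SADMG (N : Type) where
  graph : MixedGraph N
  sel : Set N

namespace SADMG

/-- Well-formedness of an isADMG. -/
def WF {N : Type} (A : SADMG N) : Prop :=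
  A.graph.IsIADMG ∧ A.sel ⊆ A.graph.outputs

/-- The observed output nodes `O`. -/
def obs {N : Type} (A : SADMG N) : Set N := A.graph.outputs \ A.sel

end SADMG

/-- An ilsADMG: an iADMG together with its sets of latent output nodes and of
latent selection nodes.  The observed output nodes are the remaining outputs. -/
structure LSADMG (N : Type) where
  graph : MixedGraph N
  latent : Set N
  sel : Set N

namespace LSADMG

/-- Well-formedness of an ilsADMG. -/
def WF {N : Type} (A : LSADMG N) : Prop :=
  A.graph.IsIADMG ∧ A.latent ⊆ A.graph.outputs ∧ A.sel ⊆ A.graph.outputs ∧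
  Disjoint A.latent A.sel

/-- The observed output nodes `O`. -/
def obs {N : Type} (A : LSADMG N) : Set N := A.graph.outputs \ (A.latent ∪ A.sel)

end LSADMG

/-- An iPAG/iMAG `P` represents the isADMG `A`: nodes match; adjacency in `P`
corresponds exactly to `S`-inducing paths in `A` (with no edges inside the inputs);
arrowheads at `a` imply `a ∉ Anc_A({b} ∪ S)`; tails at `a` imply `a ∈ Anc_A({b} ∪ S)`. -/
def RepresentsS {N : Type} (P : MixedGraph N) (A : SADMG N) : Prop :=
  P.inputs = A.graph.inputs ∧
  P.outputs = A.obs ∧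
  (∀ a b, a ≠ b → a ∈ P.nodes → b ∈ P.nodes →
    (P.adj a b ↔
      (¬(a ∈ P.inputs ∧ b ∈ P.inputs) ∧ A.graph.InducingPathBtw ∅ A.sel a b))) ∧
  (∀ a b, P.mark a b = some Mark.arrow → a ∉ A.graph.ancSet ({b} ∪ A.sel)) ∧
  (∀ a b, P.mark a b = some Mark.tail → a ∈ A.graph.ancSet ({b} ∪ A.sel))

/-- An iPAG/iMAG `P` `(L,S)`-represents the ilsADMG `A`. -/
def RepresentsLS {N : Type} (P : MixedGraph N) (A : LSADMG N) : Prop :=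
  P.inputs = A.graph.inputs ∧
  P.outputs = A.obs ∧
  (∀ a b, a ≠ b → a ∈ P.nodes → b ∈ P.nodes →
    (P.adj a b ↔
      (¬(a ∈ P.inputs ∧ b ∈ P.inputs) ∧ A.graph.InducingPathBtw A.latent A.sel a b))) ∧
  (∀ a b, P.mark a b = some Mark.arrow → a ∉ A.graph.ancSet ({b} ∪ A.sel)) ∧
  (∀ a b, P.mark a b = some Mark.tail → a ∈ A.graph.ancSet ({b} ∪ A.sel))

/-- The explicit candidate for `MAG(A)` of an ilsADMG `A`: input nodes `I`, output
nodes `O`; distinct `a,b ∈ I ∪ O` adjacent iff `{a,b} ⊄ I` and there is an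
`(L,S)`-inducing path between them in `A`; the mark at `a` on each edge is a tail
if `a ∈ Anc_A({b} ∪ S)` and an arrowhead otherwise. -/
def magOfLS {N : Type} (A : LSADMG N) : MixedGraph N where
  inputs := A.graph.inputs
  outputs := A.obs
  mark := fun a b =>
    if a ≠ b ∧ a ∈ A.graph.inputs ∪ A.obs ∧ b ∈ A.graph.inputs ∪ A.obs ∧
        ¬(a ∈ A.graph.inputs ∧ b ∈ A.graph.inputs) ∧
        A.graph.InducingPathBtw A.latent A.sel a b then
      (if a ∈ A.graph.ancSet ({b} ∪ A.sel) then some Mark.tail else some Mark.arrow)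
    else none

/-- A walk is `C`-open (in a graph without circle marks): its endnodes are not in
`C`, no non-collider on it is in `C`, and every collider on it is in `Anc(C)`. -/
def COpen {N : Type} (H : MixedGraph N) (C : Set N) (w : GWalk H) : Prop :=
  w.first ∉ C ∧ w.last ∉ C ∧
  ∀ i, 0 < i → i < w.len →
    (¬ w.ColliderAt i → w.f i ∉ C) ∧ (w.ColliderAt i → w.f i ∈ H.ancSet C)

/-- `A` is id-separated from `B` given `C` in `H` (graphs without circle marks):
every path/walk from a node of `A` to a node of `B ∪ inputs` is not `C`-open. -/
def IdSepSimple {N : Type} (H : MixedGraph N) (A B C : Set N) : Prop :=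
  ∀ w : GWalk H, w.first ∈ A → w.last ∈ B ∪ H.inputs → ¬ COpen H C w

/-- A walk in a manipulated graph `H` (with set `DI` of regime input nodes) is
`C`-id-open. -/
def IdOpen {N : Type} (H : MixedGraph N) (DI C : Set N) (w : GWalk H) : Prop :=
  w.first ∉ C ∧ w.last ∉ C ∧
  ∀ i, 0 < i → i < w.len →
    (w.f i ∉ C ∧ (H.mark (w.f i) (w.f (i - 1)) = some Mark.tail ∨
        H.mark (w.f i) (w.f (i + 1)) = some Mark.tail)) ∨
    (w.f i ∉ C ∧ H.mark (w.f i) (w.f (i - 1)) = some Mark.circle ∧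
        H.mark (w.f i) (w.f (i + 1)) = some Mark.circle ∧
        ¬ H.adj (w.f (i - 1)) (w.f (i + 1))) ∨
    (w.ColliderAt i ∧ w.f (i - 1) ∉ DI ∧ w.f i ∉ DI ∧ w.f (i + 1) ∉ DI ∧
        w.f i ∈ H.ancSet C) ∨
    (w.ColliderAt i ∧ ¬(w.f (i - 1) ∉ DI ∧ w.f i ∉ DI ∧ w.f (i + 1) ∉ DI) ∧
        w.f i ∈ H.poAnSet (C ∩ H.outputs)) ∨
    (w.f (i - 1) ∈ DI ∧ H.mark (w.f i) (w.f (i - 1)) = some Mark.circle ∧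
        H.mark (w.f i) (w.f (i + 1)) = some Mark.arrow ∧
        w.f i ∈ H.poAnSet (C ∩ H.outputs)) ∨
    (w.f (i + 1) ∈ DI ∧ H.mark (w.f i) (w.f (i - 1)) = some Mark.arrow ∧
        H.mark (w.f i) (w.f (i + 1)) = some Mark.circle ∧
        w.f i ∈ H.poAnSet (C ∩ H.outputs))

/-- `A` is id-separated from `B` given `C` in the manipulated graph `H`, whose set
of regime input nodes is `DI`: every path/walk from a node of `A` to a node of
`B ∪ inputs` is not `C`-id-open. -/
def IdSep {N : Type} (H : MixedGraph N) (DI A B C : Set N) : Prop :=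
  ∀ w : GWalk H, w.first ∈ A → w.last ∈ B ∪ H.inputs → ¬ IdOpen H DI C w

/-- Hard manipulation `do(T)` of an isADMG-type graph: reclassify the nodes of `T`
as input nodes and delete every edge with an arrowhead at a node of `T`. -/
def admgHardManip {N : Type} (G : MixedGraph N) (T : Set N) : MixedGraph N where
  inputs := G.inputs ∪ (T ∩ G.outputs)
  outputs := G.outputs \ T
  mark := fun x y =>
    if (x ∈ T ∧ G.mark x y = some Mark.arrow) ∨
        (y ∈ T ∧ G.mark y x = some Mark.arrow) then none
    else G.mark x y

/-- Soft manipulation `do(I_D)` of an isADMG-type graph: add a fresh input node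
`I_d = Sum.inr d` and the directed edge `I_d → d` for each `d ∈ D`. -/
def admgSoftManip {N : Type} (G : MixedGraph N) (D : Set N) : MixedGraph (N ⊕ N) where
  inputs := Sum.inl '' G.inputs ∪ Sum.inr '' D
  outputs := Sum.inl '' G.outputs
  mark := fun x y =>
    match x, y with
    | Sum.inl a, Sum.inl b => G.mark a b
    | Sum.inr d, Sum.inl a => if d ∈ D ∧ a = d then some Mark.tail else none
    | Sum.inl a, Sum.inr d => if d ∈ D ∧ a = d then some Mark.arrow else none
    | Sum.inr _, Sum.inr _ => none

/-- Soft manipulation of an isADMG. -/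
def SADMG.softManip {N : Type} (A : SADMG N) (D : Set N) : SADMG (N ⊕ N) where
  graph := admgSoftManip A.graph D
  sel := Sum.inl '' A.sel

/-- Hard manipulation `do(T)` of an iMAG-type graph: input nodes `I ∪ (T ∩ V)`,
output nodes `V \ T`; delete all edges with an arrowhead at a node of `T \ I` and
all edges between two nodes of `T ∪ I`. -/
def magHardManip {N : Type} (G : MixedGraph N) (T : Set N) : MixedGraph N where
  inputs := G.inputs ∪ (T ∩ G.outputs)
  outputs := G.outputs \ T
  mark := fun x y =>
    if (x ∈ T ∧ x ∉ G.inputs ∧ G.mark x y = some Mark.arrow) ∨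
        (y ∈ T ∧ y ∉ G.inputs ∧ G.mark y x = some Mark.arrow) ∨
        ((x ∈ T ∨ x ∈ G.inputs) ∧ (y ∈ T ∨ y ∈ G.inputs)) then none
    else G.mark x y

/-- The mark at node `y` on the new edge between the regime node `I_a = Sum.inr a`
and `y` in the soft manipulation of an iMAG-type graph `G` over `N ⊕ N`
(`none` if there is no such edge): `I_a → a` if some edge of `G` has an arrowhead
at `a`; `I_a − a` if some undirected edge is at `a`; `I_a −∘ a` otherwise;
`I_a → b` for every output `b` with `a → b` invisible; `I_a − b` for every output
`b` with `a − b` in `G`. -/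
def magSoftTarget {N : Type} (G : MixedGraph (N ⊕ N)) (a : N) (y : N ⊕ N) : Option Mark :=
  if y = Sum.inl a then
    (if G.arrowAt (Sum.inl a) then some Mark.arrow
     else if ∃ c, G.undir (Sum.inl a) c then some Mark.tail
     else some Mark.circle)
  else if y ∈ G.outputs ∧ G.dir (Sum.inl a) y ∧ ¬ G.VisibleCond (Sum.inl a) y then
    some Mark.arrow
  else if y ∈ G.outputs ∧ G.undir (Sum.inl a) y then some Mark.tail
  else none

/-- The mark at node `y` on the new edge between the regime node `I_a = Sum.inr a`
and `y` in the soft manipulation of an iPAG-type graph `G` over `N ⊕ N`. -/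
def pagSoftTarget {N : Type} (G : MixedGraph (N ⊕ N)) (a : N) (y : N ⊕ N) : Option Mark :=
  if y = Sum.inl a then
    (if G.arrowAt (Sum.inl a) then some Mark.arrow
     else if ∃ c, G.undir (Sum.inl a) c then some Mark.tail
     else some Mark.circle)
  else if y ∈ G.outputs ∧ ((G.dir (Sum.inl a) y ∧ ¬ G.VisibleCond (Sum.inl a) y) ∨
      G.circArrow (Sum.inl a) y) then some Mark.arrow
  else if y ∈ G.outputs ∧ (G.undir (Sum.inl a) y ∨
      (G.circTail (Sum.inl a) y ∧ ∃ c, G.undir c y)) then some Mark.tail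
  else if y ∈ G.outputs ∧ (G.tailCirc (Sum.inl a) y ∨ G.circCirc (Sum.inl a) y ∨
      (G.circTail (Sum.inl a) y ∧ ¬ ∃ c, G.undir c y)) then some Mark.circle
  else none

/-- Generic soft-manipulation step on a graph over `N ⊕ N`: for each `a ∈ A` not
already an input, the regime node `I_a = Sum.inr a` is added as an input node,
with edges (and end marks) prescribed by `target`; the mark at `I_a` on each new
edge is a tail. -/
def softManipStep {N : Type}
    (target : MixedGraph (N ⊕ N) → N → (N ⊕ N) → Option Mark)
    (G : MixedGraph (N ⊕ N)) (A : Set N) : MixedGraph (N ⊕ N) where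
  inputs := G.inputs ∪ Sum.inr '' {a | a ∈ A ∧ Sum.inl a ∉ G.inputs}
  outputs := G.outputs
  mark := fun x y =>
    match x, y with
    | Sum.inr a, Sum.inr b =>
        if a ∈ A ∧ Sum.inl a ∉ G.inputs then
          (if (target G a (Sum.inr b)).isSome then some Mark.tail else none)
        else if b ∈ A ∧ Sum.inl b ∉ G.inputs then target G b (Sum.inr a)
        else G.mark x y
    | Sum.inr a, Sum.inl v =>
        if a ∈ A ∧ Sum.inl a ∉ G.inputs then
          (if (target G a (Sum.inl v)).isSome then some Mark.tail else none)
        else G.mark x y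
    | Sum.inl v, Sum.inr a =>
        if a ∈ A ∧ Sum.inl a ∉ G.inputs then target G a (Sum.inl v)
        else G.mark x y
    | Sum.inl _, Sum.inl _ => G.mark x y

/-- Soft-manipulation step for iMAG-type graphs over `N ⊕ N`. -/
def magSoftManipStep {N : Type} (G : MixedGraph (N ⊕ N)) (A : Set N) :
    MixedGraph (N ⊕ N) :=
  softManipStep magSoftTarget G A

/-- The soft-manipulated iMAG `M_{do(I_A)}`, over node type `N ⊕ N`. -/
def magSoftManip {N : Type} (M : MixedGraph N) (A : Set N) : MixedGraph (N ⊕ N) :=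
  magSoftManipStep M.sumInl A

/-- The soft-manipulated iPAG `P_{do(I_A)}`, over node type `N ⊕ N`. -/
def pagSoftManip {N : Type} (P : MixedGraph N) (A : Set N) : MixedGraph (N ⊕ N) :=
  softManipStep pagSoftTarget P.sumInl A

/-- Hard manipulation `do(T)` of an iPAG-type graph: as for iMAGs, but in addition
every remaining circle mark at a manipulated node is replaced by a tail. -/
def pagHardManip {N : Type} (G : MixedGraph N) (T : Set N) : MixedGraph N where
  inputs := G.inputs ∪ T
  outputs := G.outputs \ T
  mark := fun x y =>
    if (x ∈ T ∧ x ∉ G.inputs ∧ G.mark x y = some Mark.arrow) ∨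
        (y ∈ T ∧ y ∉ G.inputs ∧ G.mark y x = some Mark.arrow) ∨
        ((x ∈ T ∨ x ∈ G.inputs) ∧ (y ∈ T ∨ y ∈ G.inputs)) then none
    else if x ∈ T ∧ x ∉ G.inputs ∧ y ∈ G.outputs ∧ y ∉ T ∧
        G.mark x y = some Mark.circle then some Mark.tail
    else G.mark x y

/-- Orient all circle marks of `G` as tails. -/
def orientCirclesTails {N : Type} (G : MixedGraph N) : MixedGraph N :=
  { G with
    mark := fun x y =>
      (G.mark x y).map (fun m => if m = Mark.circle then Mark.tail else m) }

/-- There is a pc-connecting path from `a` to `b` in `G`: a single edge between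
`a` and `b` that is not a visible directed edge, or a path
`a *→ v₁ ↔ ⋯ ↔ v_{n−1} ←* b` (`n > 1`) none of whose edges is visible directed. -/
def PcConn {N : Type} (G : MixedGraph N) (a b : N) : Prop :=
  (G.adj a b ∧ ¬ G.VisibleDir a b ∧ ¬ G.VisibleDir b a) ∨
  (∃ w : GWalk G, w.IsPath ∧ 1 < w.len ∧ w.first = a ∧ w.last = b ∧
    G.mark (w.f 1) (w.f 0) = some Mark.arrow ∧
    G.mark (w.f (w.len - 1)) (w.f w.len) = some Mark.arrow ∧
    (∀ i, 1 ≤ i → i < w.len - 1 → G.bidir (w.f i) (w.f (i + 1))) ∧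
    (∀ i < w.len, ¬ G.VisibleDir (w.f i) (w.f (i + 1)) ∧
      ¬ G.VisibleDir (w.f (i + 1)) (w.f i)))

/-- The pc-component of `b` in `G`. -/
def pcSet {N : Type} (G : MixedGraph N) (b : N) : Set N := {a | PcConn G a b}

/-- The region of a set `B` in `G`: all nodes in the bucket of some node
pc-connected to a node of `B`. -/
def regionSet {N : Type} (G : MixedGraph N) (B : Set N) : Set N :=
  {a | ∃ b ∈ B, ∃ c, PcConn G c b ∧ G.SameBucket a c}

/-- `S` is a bucket of `G`. -/
def IsBucket {N : Type} (G : MixedGraph N) (S : Set N) : Prop :=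
  ∃ a ∈ G.nodes, S = {x | G.SameBucket x a}

/-- FCI rule R1 (closure form): if `k *→ j` with the edge between `j` and `i`
carrying a circle at `j`, `i` and `k` non-adjacent and `i` not an input node,
then that edge is `j → i`. -/
def FciR1 {N : Type} (P : MixedGraph N) : Prop :=
  ∀ i j k, P.mark j k = some Mark.arrow → ¬ P.adj i k → i ∉ P.inputs →
    P.mark j i = some Mark.circle → P.dir j i

/-- FCI rule R2 (closure form): if `i → j *→ k` or `i *→ j → k` with the edge
between `i` and `k` carrying a circle at `k`, then that edge has an arrowhead at `k`. -/
def FciR2 {N : Type} (P : MixedGraph N) : Prop :=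
  ∀ i j k, ((P.dir i j ∧ P.mark k j = some Mark.arrow) ∨
      (P.mark j i = some Mark.arrow ∧ P.dir j k)) →
    P.mark k i = some Mark.circle → P.mark k i = some Mark.arrow

/-- FCI rule R4 (closure form): for every discriminating path `⟨a,…,y,z⟩` for `y`,
the mark at `y` on the edge between `y` and `z` is not a circle. -/
def FciR4 {N : Type} (P : MixedGraph N) : Prop :=
  ∀ w : GWalk P, w.IsPath → 3 ≤ w.len → ¬ P.adj (w.f 0) (w.f w.len) →
    (∀ i, 0 < i → i < w.len - 1 → w.ColliderAt i ∧ P.dir (w.f i) (w.f w.len)) →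
    P.mark (w.f (w.len - 1)) (w.f w.len) ≠ some Mark.circle

/-- Property (P2) of iSOPAGs: no `a *→ b` together with `b −∘ c`, and no
`a *→ b` together with `b ∘− c`. -/
def SopagP2 {N : Type} (P : MixedGraph N) : Prop :=
  ∀ a b c, P.mark b a = some Mark.arrow → ¬ P.tailCirc b c ∧ ¬ P.circTail b c

/-- Property (P3) of iSOPAGs: if `a *→ b` and the edge between `b` and `c` has a
circle at `b`, then `a *→ c`. -/
def SopagP3 {N : Type} (P : MixedGraph N) : Prop :=
  ∀ a b c, P.mark b a = some Mark.arrow → P.mark b c = some Mark.circle →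
    P.mark c a = some Mark.arrow

/-- `P` is an iSOPAG: an iPAG representing some isADMG, closed under the FCI
orientation rules (R1, R2, R4), and satisfying (P2) and (P3). -/
def IsISOPAG {N : Type} (P : MixedGraph N) : Prop :=
  P.IsIPAG ∧ (∃ A : SADMG N, A.WF ∧ RepresentsS P A) ∧
  FciR1 P ∧ FciR2 P ∧ FciR4 P ∧ SopagP2 P ∧ SopagP3 P


namespace Stmt9

open MixedGraph GWalk Sum

variable {N : Type}

/-! ### Basic facts -/

lemma adj_symm {G : MixedGraph N} (hwf : G.WF) {a b : N} (h : G.adj a b) : G.adj b a :=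
  hwf.2.2.2.1 a b h

lemma ne_of_adj {G : MixedGraph N} (hwf : G.WF) {a b : N} (h : G.adj a b) : a ≠ b := by
  rintro rfl
  rw [MixedGraph.adj, hwf.2.2.2.2.1 a] at h
  simp at h

lemma adj_of_mark {G : MixedGraph N} {a b : N} {m : Mark} (h : G.mark a b = some m) :
    G.adj a b := by
  rw [MixedGraph.adj, h]; rfl

lemma mark_cases {G : MixedGraph N} (hnc : ∀ a b, G.mark a b ≠ some Mark.circle) {a b : N}
    (h : G.adj a b) : G.mark a b = some Mark.tail ∨ G.mark a b = some Mark.arrow := by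
  rw [MixedGraph.adj, Option.isSome_iff_exists] at h
  obtain ⟨m, hm⟩ := h
  cases m with
  | tail => exact Or.inl hm
  | arrow => exact Or.inr hm
  | circle => exact absurd hm (hnc a b)

lemma ancSet_mono {G : MixedGraph N} {S T : Set N} (h : S ⊆ T) :
    G.ancSet S ⊆ G.ancSet T := by
  rintro a ⟨s, hs, h2⟩; exact ⟨s, h hs, h2⟩

lemma anc_mem_ancSet {G : MixedGraph N} {a b : N} {S : Set N} (h : G.anc a b)
    (hb : b ∈ G.ancSet S) : a ∈ G.ancSet S := by
  obtain ⟨s, hs, h2⟩ := hb; exact ⟨s, hs, h.trans h2⟩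

lemma mem_ancSet_self {G : MixedGraph N} {a : N} {S : Set N} (h : a ∈ S) : a ∈ G.ancSet S :=
  ⟨a, h, Relation.ReflTransGen.refl⟩

lemma mem_ancSet_trans {G : MixedGraph N} {a b c : N} {S : Set N}
    (h1 : a ∈ G.ancSet ({b} ∪ S)) (h2 : b ∈ G.ancSet ({c} ∪ S)) :
    a ∈ G.ancSet ({c} ∪ S) := by
  obtain ⟨s, hs, ha⟩ := h1
  rcases hs with hs | hs
  · rw [Set.mem_singleton_iff] at hs; subst hs
    exact anc_mem_ancSet ha h2
  · exact ⟨s, Or.inr hs, ha⟩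

lemma anc_antisymm {G : MixedGraph N} (hac : ∀ a b, G.dir a b → ¬ G.anc b a) {a b : N}
    (h1 : G.anc a b) (h2 : G.anc b a) : a = b := by
  rcases Relation.ReflTransGen.cases_head h1 with rfl | ⟨c, hc, hcb⟩
  · rfl
  · exact absurd (hcb.trans h2) (hac a c hc)

/-! ### Walk constructions -/

/-- The single-edge walk. -/
def edgeW {G : MixedGraph N} {a b : N} (h : G.adj a b) : GWalk G :=
  ⟨1, fun k => if k = 0 then a else b, by
    intro i hi
    have : i = 0 := by omega
    subst this
    simpa using h⟩

@[simp] lemma edgeW_len {G : MixedGraph N} {a b : N} (h : G.adj a b) : (edgeW h).len = 1 := rfl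

lemma edgeW_f0 {G : MixedGraph N} {a b : N} (h : G.adj a b) : (edgeW h).f 0 = a := rfl

lemma edgeW_f1 {G : MixedGraph N} {a b : N} (h : G.adj a b) : (edgeW h).f 1 = b := rfl

/-- Append two walks. -/
def appendW {G : MixedGraph N} (w₁ w₂ : GWalk G) (h : w₁.last = w₂.first) : GWalk G :=
  ⟨w₁.len + w₂.len, fun k => if k ≤ w₁.len then w₁.f k else w₂.f (k - w₁.len), by
    intro i hi
    show G.adj (if i ≤ w₁.len then w₁.f i else w₂.f (i - w₁.len))
      (if i + 1 ≤ w₁.len then w₁.f (i + 1) else w₂.f (i + 1 - w₁.len))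
    rcases lt_trichotomy i w₁.len with h1 | h1 | h1
    · rw [if_pos (show i ≤ w₁.len by omega), if_pos (show i + 1 ≤ w₁.len by omega)]
      exact w₁.hadj i h1
    · rw [if_pos (show i ≤ w₁.len by omega), if_neg (show ¬ (i + 1 ≤ w₁.len) by omega)]
      have h3 : i + 1 - w₁.len = 1 := by omega
      rw [h3, h1]
      have h0 : 0 < w₂.len := by omega
      have := w₂.hadj 0 h0
      rw [GWalk.last, GWalk.first] at h
      rw [h]
      exact this
    · rw [if_neg (show ¬ (i ≤ w₁.len) by omega), if_neg (show ¬ (i + 1 ≤ w₁.len) by omega)]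
      have h4 : i + 1 - w₁.len = (i - w₁.len) + 1 := by omega
      rw [h4]
      exact w₂.hadj (i - w₁.len) (by omega)⟩

@[simp] lemma appendW_len {G : MixedGraph N} (w₁ w₂ : GWalk G) (h : w₁.last = w₂.first) :
    (appendW w₁ w₂ h).len = w₁.len + w₂.len := rfl

lemma appendW_f_le {G : MixedGraph N} {w₁ w₂ : GWalk G} (h : w₁.last = w₂.first) {k : ℕ}
    (hk : k ≤ w₁.len) : (appendW w₁ w₂ h).f k = w₁.f k := by
  show (if k ≤ w₁.len then w₁.f k else w₂.f (k - w₁.len)) = w₁.f k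
  rw [if_pos hk]

lemma appendW_f_ge {G : MixedGraph N} {w₁ w₂ : GWalk G} (h : w₁.last = w₂.first) {k : ℕ}
    (hk : w₁.len ≤ k) : (appendW w₁ w₂ h).f k = w₂.f (k - w₁.len) := by
  show (if k ≤ w₁.len then w₁.f k else w₂.f (k - w₁.len)) = w₂.f (k - w₁.len)
  rcases eq_or_lt_of_le hk with h1 | h1
  · rw [if_pos (le_of_eq h1.symm)]
    have h2 : k - w₁.len = 0 := by omega
    rw [h2]
    rw [GWalk.last, GWalk.first] at h
    rw [← h1]
    exact h
  · rw [if_neg (by omega)]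

lemma appendW_first {G : MixedGraph N} (w₁ w₂ : GWalk G) (h : w₁.last = w₂.first) :
    (appendW w₁ w₂ h).first = w₁.first := appendW_f_le h (Nat.zero_le _)

lemma appendW_last {G : MixedGraph N} (w₁ w₂ : GWalk G) (h : w₁.last = w₂.first) :
    (appendW w₁ w₂ h).last = w₂.last := by
  show (appendW w₁ w₂ h).f (w₁.len + w₂.len) = w₂.f w₂.len
  rw [appendW_f_ge h (by omega)]
  congr 1
  omega

/-- The suffix of a walk starting at position `j`. -/
def suffixW {G : MixedGraph N} (w : GWalk G) (j : ℕ) : GWalk G :=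
  ⟨w.len - j, fun k => w.f (j + k), by
    intro i hi
    show G.adj (w.f (j + i)) (w.f (j + (i + 1)))
    have h1 : j + (i + 1) = (j + i) + 1 := by omega
    rw [h1]
    exact w.hadj (j + i) (by omega)⟩

@[simp] lemma suffixW_len {G : MixedGraph N} (w : GWalk G) (j : ℕ) :
    (suffixW w j).len = w.len - j := rfl

@[simp] lemma suffixW_f {G : MixedGraph N} (w : GWalk G) (j k : ℕ) :
    (suffixW w j).f k = w.f (j + k) := rfl

/-- The prefix of a walk, up to position `j`. -/
def prefixW {G : MixedGraph N} (w : GWalk G) (j : ℕ) (hj : j ≤ w.len) : GWalk G :=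
  ⟨j, w.f, fun i hi => w.hadj i (lt_of_lt_of_le hi hj)⟩

@[simp] lemma prefixW_len {G : MixedGraph N} (w : GWalk G) (j : ℕ) (hj : j ≤ w.len) :
    (prefixW w j hj).len = j := rfl

@[simp] lemma prefixW_f {G : MixedGraph N} (w : GWalk G) (j : ℕ) (hj : j ≤ w.len) (k : ℕ) :
    (prefixW w j hj).f k = w.f k := rfl

/-- Reversal of a walk (needs symmetry of adjacency). -/
def reverseW {G : MixedGraph N} (hwf : G.WF) (w : GWalk G) : GWalk G :=
  ⟨w.len, fun k => w.f (w.len - k), by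
    intro i hi
    show G.adj (w.f (w.len - i)) (w.f (w.len - (i + 1)))
    have h1 : w.len - i = (w.len - (i + 1)) + 1 := by omega
    rw [h1]
    exact adj_symm hwf (w.hadj (w.len - (i + 1)) (by omega))⟩

@[simp] lemma reverseW_len {G : MixedGraph N} (hwf : G.WF) (w : GWalk G) :
    (reverseW hwf w).len = w.len := rfl

@[simp] lemma reverseW_f {G : MixedGraph N} (hwf : G.WF) (w : GWalk G) (k : ℕ) :
    (reverseW hwf w).f k = w.f (w.len - k) := rfl

/-- Make an inducing walk from all-collider data. -/
lemma mk_inducing {G : MixedGraph N} {S : Set N} {w : GWalk G}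
    (hcol : ∀ i, 0 < i → i < w.len →
      w.ColliderAt i ∧ w.f i ∈ G.ancSet ({w.first, w.last} ∪ S)) :
    G.InducingWalk ∅ S w :=
  ⟨fun i h1 h2 => Or.inr (hcol i h1 h2).1, fun i h1 h2 _ => (hcol i h1 h2).2⟩

lemma inducing_colliders {G : MixedGraph N} {S : Set N} {w : GWalk G}
    (hw : G.InducingWalk ∅ S w) :
    ∀ i, 0 < i → i < w.len →
      w.ColliderAt i ∧ w.f i ∈ G.ancSet ({w.first, w.last} ∪ S) := by
  intro i h1 h2
  rcases hw.1 i h1 h2 with h | h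
  · exact absurd h (Set.notMem_empty _)
  · exact ⟨h, hw.2 i h1 h2 h⟩


lemma appendW_colliders {G : MixedGraph N} {w₁ w₂ : GWalk G} (h : w₁.last = w₂.first) (T : Set N)
    (h₁ : ∀ i, 0 < i → i < w₁.len → w₁.ColliderAt i ∧ w₁.f i ∈ G.ancSet T)
    (h₂ : ∀ i, 0 < i → i < w₂.len → w₂.ColliderAt i ∧ w₂.f i ∈ G.ancSet T)
    (hj : 0 < w₁.len → 0 < w₂.len →
      G.mark (w₂.f 0) (w₁.f (w₁.len - 1)) = some Mark.arrow ∧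
      G.mark (w₂.f 0) (w₂.f 1) = some Mark.arrow ∧ w₂.f 0 ∈ G.ancSet T) :
    ∀ i, 0 < i → i < (appendW w₁ w₂ h).len →
      (appendW w₁ w₂ h).ColliderAt i ∧ (appendW w₁ w₂ h).f i ∈ G.ancSet T := by
  intro i h0 hlen
  rw [appendW_len] at hlen
  rcases lt_trichotomy i w₁.len with h1 | h1 | h1
  · have e1 : (appendW w₁ w₂ h).f (i - 1) = w₁.f (i - 1) := appendW_f_le h (by omega)
    have e2 : (appendW w₁ w₂ h).f i = w₁.f i := appendW_f_le h (by omega)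
    have e3 : (appendW w₁ w₂ h).f (i + 1) = w₁.f (i + 1) := appendW_f_le h (by omega)
    obtain ⟨hc, ha⟩ := h₁ i h0 h1
    exact ⟨⟨by rw [e2, e1]; exact hc.1, by rw [e2, e3]; exact hc.2⟩, by rw [e2]; exact ha⟩
  · have hl1 : 0 < w₁.len := by omega
    have hl2 : 0 < w₂.len := by omega
    obtain ⟨j1, j2, j3⟩ := hj hl1 hl2
    have e1 : (appendW w₁ w₂ h).f (i - 1) = w₁.f (w₁.len - 1) := by
      rw [appendW_f_le h (by omega), h1]
    have e2 : (appendW w₁ w₂ h).f i = w₂.f 0 := by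
      rw [appendW_f_ge h (by omega)]
      congr 1
      omega
    have e3 : (appendW w₁ w₂ h).f (i + 1) = w₂.f 1 := by
      rw [appendW_f_ge h (by omega)]
      congr 1
      omega
    exact ⟨⟨by rw [e2, e1]; exact j1, by rw [e2, e3]; exact j2⟩, by rw [e2]; exact j3⟩
  · have e1 : (appendW w₁ w₂ h).f (i - 1) = w₂.f ((i - w₁.len) - 1) := by
      rw [appendW_f_ge h (by omega)]
      congr 1
      omega
    have e2 : (appendW w₁ w₂ h).f i = w₂.f (i - w₁.len) := appendW_f_ge h (by omega)
    have e3 : (appendW w₁ w₂ h).f (i + 1) = w₂.f ((i - w₁.len) + 1) := by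
      rw [appendW_f_ge h (by omega)]
      congr 1
      omega
    obtain ⟨hc, ha⟩ := h₂ (i - w₁.len) (by omega) (by omega)
    exact ⟨⟨by rw [e2, e1]; exact hc.1, by rw [e2, e3]; exact hc.2⟩, by rw [e2]; exact ha⟩

/-- Every inducing walk (with `L = ∅`) can be shortened to an inducing path. -/
lemma inducing_walk_to_path {G : MixedGraph N} {S : Set N} {a b : N}
    (h : G.InducingWalkBtw ∅ S a b) : G.InducingPathBtw ∅ S a b := by
  obtain ⟨w0, hf0, hl0, hw0⟩ := h
  suffices H : ∀ n (w : GWalk G), w.len ≤ n → w.first = a → w.last = b →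
      G.InducingWalk ∅ S w → G.InducingPathBtw ∅ S a b from
    H w0.len w0 le_rfl hf0 hl0 hw0
  intro n
  induction n with
  | zero =>
    intro w hlen hf hl hw
    refine ⟨w, ?_, hf, hl, hw⟩
    intro i hi j hj _
    omega
  | succ n ih =>
    intro w hlen hf hl hw
    by_cases hp : w.IsPath
    · exact ⟨w, hp, hf, hl, hw⟩
    obtain ⟨i, hi, j, hj, hij, hdup⟩ :
        ∃ i, i ≤ w.len ∧ ∃ j, j ≤ w.len ∧ i < j ∧ w.f i = w.f j := by
      rw [GWalk.IsPath] at hp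
      push_neg at hp
      obtain ⟨i, hi, j, hj, hdup, hne⟩ := hp
      rcases lt_or_gt_of_ne hne with hlt | hlt
      · exact ⟨i, hi, j, hj, hlt, hdup⟩
      · exact ⟨j, hj, i, hi, hlt, hdup.symm⟩
    have hcol := inducing_colliders hw
    rw [hf, hl] at hcol
    set d := j - i with hd
    have hd0 : 0 < d := by omega
    have hdle : d ≤ w.len := by omega
    have hadj' : ∀ k, k < w.len - d →
        G.adj (if k ≤ i then w.f k else w.f (k + d))
          (if k + 1 ≤ i then w.f (k + 1) else w.f (k + 1 + d)) := by
      intro k hk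
      rcases lt_trichotomy k i with h1 | h1 | h1
      · rw [if_pos (show k ≤ i by omega), if_pos (show k + 1 ≤ i by omega)]
        exact w.hadj k (by omega)
      · rw [if_pos (show k ≤ i by omega), if_neg (show ¬ (k + 1 ≤ i) by omega)]
        have h2 : k + 1 + d = j + 1 := by omega
        rw [h2, h1, hdup]
        exact w.hadj j (by omega)
      · rw [if_neg (show ¬ (k ≤ i) by omega), if_neg (show ¬ (k + 1 ≤ i) by omega)]
        have h2 : k + 1 + d = (k + d) + 1 := by omega
        rw [h2]
        exact w.hadj (k + d) (by omega)
    set w' : GWalk G := ⟨w.len - d, fun k => if k ≤ i then w.f k else w.f (k + d), hadj'⟩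
      with hw'def
    have wf_le : ∀ k, k ≤ i → w'.f k = w.f k := fun k hk => if_pos hk
    have wf_gt : ∀ k, i < k → w'.f k = w.f (k + d) := fun k hk => if_neg (by omega)
    have hf' : w'.first = a := by rw [← hf]; exact wf_le 0 (by omega)
    have hl' : w'.last = b := by
      rw [← hl]
      show w'.f (w.len - d) = w.f w.len
      rcases le_or_gt (w.len - d) i with h1 | h1
      · have hji : j = w.len := by omega
        have h2 : w.len - d = i := by omega
        rw [wf_le _ h1, h2, hdup, hji]
      · rw [wf_gt _ h1]
        congr 1
        omega
    have hcol' : ∀ k, 0 < k → k < w'.len →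
        w'.ColliderAt k ∧ w'.f k ∈ G.ancSet ({a, b} ∪ S) := by
      intro k h0 hk
      have hk' : k < w.len - d := hk
      rcases lt_trichotomy k i with h1 | h1 | h1
      · have e1 : w'.f (k - 1) = w.f (k - 1) := wf_le _ (by omega)
        have e2 : w'.f k = w.f k := wf_le _ (by omega)
        have e3 : w'.f (k + 1) = w.f (k + 1) := wf_le _ (by omega)
        obtain ⟨hc, ha⟩ := hcol k h0 (by omega)
        exact ⟨⟨by rw [e2, e1]; exact hc.1, by rw [e2, e3]; exact hc.2⟩, by rw [e2]; exact ha⟩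
      · have hjlen : j < w.len := by omega
        have e1 : w'.f (k - 1) = w.f (k - 1) := wf_le _ (by omega)
        have e2 : w'.f k = w.f k := wf_le _ (by omega)
        have e3 : w'.f (k + 1) = w.f (j + 1) := by
          rw [wf_gt _ (by omega)]
          congr 1
          omega
        obtain ⟨hci, hai⟩ := hcol i (by omega) (by omega)
        obtain ⟨hcj, haj⟩ := hcol j (by omega) hjlen
        refine ⟨⟨?_, ?_⟩, ?_⟩
        · rw [e2, e1, h1]; exact hci.1
        · rw [e2, e3, h1, hdup]; exact hcj.2
        · rw [e2, h1]; exact hai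
      · have e1 : w'.f (k - 1) = w.f (k - 1 + d) := by
          rcases eq_or_lt_of_le (show i ≤ k - 1 by omega) with h2 | h2
          · rw [wf_le _ (le_of_eq h2.symm)]
            have h3 : k - 1 = i := h2.symm
            rw [h3, hdup]
            congr 1
            omega
          · exact wf_gt _ h2
        have e2 : w'.f k = w.f (k + d) := wf_gt _ h1
        have e3 : w'.f (k + 1) = w.f (k + d + 1) := by
          rw [wf_gt _ (by omega)]
          congr 1
          omega
        obtain ⟨hc, ha⟩ := hcol (k + d) (by omega) (by omega)
        refine ⟨⟨?_, ?_⟩, ?_⟩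
        · rw [e2, e1]
          have h3 : k - 1 + d = k + d - 1 := by omega
          rw [h3]
          exact hc.1
        · rw [e2, e3]; exact hc.2
        · rw [e2]; exact ha
    have hw'' : G.InducingWalk ∅ S w' := by
      apply mk_inducing
      rw [hf', hl']
      exact hcol'
    exact ih w' (by show w.len - d ≤ n; omega) hf' hl' hw''


lemma first_def {G : MixedGraph N} (w : GWalk G) : w.first = w.f 0 := rfl
lemma last_def {G : MixedGraph N} (w : GWalk G) : w.last = w.f w.len := rfl

lemma reverseW_first {G : MixedGraph N} (hwf : G.WF) (w : GWalk G) :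
    (reverseW hwf w).first = w.last := by
  show w.f (w.len - 0) = w.f w.len
  rw [Nat.sub_zero]

lemma reverseW_last {G : MixedGraph N} (hwf : G.WF) (w : GWalk G) :
    (reverseW hwf w).last = w.first := by
  show w.f (w.len - w.len) = w.f 0
  rw [Nat.sub_self]

lemma inducing_reverse {G : MixedGraph N} (hwf : G.WF) {S : Set N} {w : GWalk G}
    (hw : G.InducingWalk ∅ S w) : G.InducingWalk ∅ S (reverseW hwf w) := by
  apply mk_inducing
  intro k h0 hk
  rw [reverseW_len] at hk
  obtain ⟨hc, ha⟩ := inducing_colliders hw (w.len - k) (by omega) (by omega)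
  have e1 : (reverseW hwf w).f (k - 1) = w.f (w.len - k + 1) := by
    have h1 := reverseW_f hwf w (k - 1)
    rw [show w.len - (k - 1) = w.len - k + 1 from by omega] at h1
    exact h1
  have e2 : (reverseW hwf w).f k = w.f (w.len - k) := rfl
  have e3 : (reverseW hwf w).f (k + 1) = w.f (w.len - k - 1) := by
    have h1 := reverseW_f hwf w (k + 1)
    rw [show w.len - (k + 1) = w.len - k - 1 from by omega] at h1
    exact h1
  refine ⟨⟨?_, ?_⟩, ?_⟩
  · rw [e2, e1]; exact hc.2
  · rw [e2, e3]; exact hc.1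
  · rw [e2]
    have hfl : ({(reverseW hwf w).first, (reverseW hwf w).last} : Set N) ∪ S
        = ({w.first, w.last} : Set N) ∪ S := by
      rw [reverseW_first, reverseW_last, Set.pair_comm]
    rw [hfl]
    exact ha

lemma inducingWalkBtw_symm {G : MixedGraph N} (hwf : G.WF) {S : Set N} {a b : N}
    (h : G.InducingWalkBtw ∅ S a b) : G.InducingWalkBtw ∅ S b a := by
  obtain ⟨w, h1, h2, h3⟩ := h
  exact ⟨reverseW hwf w, by rw [reverseW_first, h2], by rw [reverseW_last, h1],
    inducing_reverse hwf h3⟩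

/-! ### iMAG mark facts -/

lemma mag_anc_antisymm {M : MixedGraph N} (hM : M.IsIMAG) {a b : N}
    (h1 : M.anc a b) (h2 : M.anc b a) : a = b :=
  anc_antisymm hM.1.2.2.2.1 h1 h2

lemma mag_tail_of_anc {M : MixedGraph N} (hM : M.IsIMAG) {d b : N} (hadj : M.adj d b)
    (hanc : M.anc d b) : M.mark d b = some Mark.tail := by
  rcases mark_cases hM.2 hadj with h | h
  · exact h
  · exfalso
    have hadj' := adj_symm hM.1.1 hadj
    rcases mark_cases hM.2 hadj' with h2 | h2
    · exact hM.1.2.2.2.1 b d ⟨h2, h⟩ hanc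
    · exact hM.1.2.2.2.2.1 d b hanc ⟨h2, h⟩

/-- In an iADMG the mark at the start of an edge is tail or arrow, and tail means
a directed edge. -/
lemma admg_edge_cases {AG : MixedGraph N} (h : AG.IsIADMG) {a b : N} (hadj : AG.adj a b) :
    AG.mark a b = some Mark.arrow ∨ AG.dir a b := by
  rcases h.2.1 a b hadj with h1 | h1 | h1
  · exact Or.inr h1
  · exact Or.inl h1.2
  · exact Or.inl h1.1

/-- Repair lemma: an inducing walk from `p` either starts with an arrowhead at `p`,
or `p` is an ancestor of `{last} ∪ S`. -/
lemma repair_start {AG : MixedGraph N} (hadmg : AG.IsIADMG) {S : Set N} {w : GWalk AG}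
    (hlen : 0 < w.len) (hw : AG.InducingWalk ∅ S w)
    (hna : w.f 0 ∉ AG.ancSet ({w.f w.len} ∪ S)) :
    AG.mark (w.f 0) (w.f 1) = some Mark.arrow := by
  by_contra hne
  have hadj0 := w.hadj 0 hlen
  have hdir : AG.dir (w.f 0) (w.f 1) := by
    rcases admg_edge_cases hadmg hadj0 with h | h
    · exact absurd h hne
    · exact h
  rcases eq_or_lt_of_le (show 1 ≤ w.len from hlen) with h1 | h1
  · apply hna
    refine ⟨w.f w.len, Or.inl rfl, ?_⟩
    have h2 : w.f 1 = w.f w.len := by rw [← h1]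
    exact Relation.ReflTransGen.single (h2 ▸ hdir)
  · obtain ⟨hc, ha⟩ := inducing_colliders hw 1 one_pos h1
    obtain ⟨t, ht, hanc⟩ := ha
    have hanc' : AG.anc (w.f 0) t := Relation.ReflTransGen.head hdir hanc
    rw [first_def, last_def] at ht
    simp only [Set.mem_union, Set.mem_insert_iff, Set.mem_singleton_iff] at ht
    rcases ht with (ht | ht) | ht
    · subst ht
      exact hadmg.2.2.1 _ _ hdir hanc
    · subst ht
      exact hna ⟨w.f w.len, Or.inl (Set.mem_singleton_iff.mpr rfl), hanc'⟩
    · exact hna ⟨t, Or.inr ht, hanc'⟩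

/-! ### `sumInl` transfer -/

lemma sumInl_mark_inl_inl (M : MixedGraph N) (u v : N) :
    (M.sumInl : MixedGraph (N ⊕ N)).mark (Sum.inl u) (Sum.inl v) = M.mark u v := rfl

lemma sumInl_mark_inl_inr (M : MixedGraph N) (u v : N) :
    (M.sumInl : MixedGraph (N ⊕ N)).mark (Sum.inl u) (Sum.inr v) = none := rfl

lemma sumInl_mark_inr (M : MixedGraph N) (u : N) (y : N ⊕ N) :
    (M.sumInl : MixedGraph (N ⊕ N)).mark (Sum.inr u) y = none := by
  cases y <;> rfl

lemma sumInl_mark_isSome {M : MixedGraph N} {x y : N ⊕ N}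
    (h : ((M.sumInl : MixedGraph (N ⊕ N)).mark x y).isSome) :
    ∃ u v, x = Sum.inl u ∧ y = Sum.inl v := by
  cases x with
  | inl u =>
    cases y with
    | inl v => exact ⟨u, v, rfl, rfl⟩
    | inr v => rw [sumInl_mark_inl_inr] at h; simp at h
  | inr u => rw [sumInl_mark_inr] at h; simp at h

lemma sumInl_adj_iff (M : MixedGraph N) (u v : N) :
    (M.sumInl : MixedGraph (N ⊕ N)).adj (Sum.inl u) (Sum.inl v) ↔ M.adj u v := Iff.rfl

lemma mem_inl_image_iff {s : Set N} {a : N} : (Sum.inl a : N ⊕ N) ∈ Sum.inl '' s ↔ a ∈ s := by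
  simp

lemma sumInl_arrowAt_iff (M : MixedGraph N) (a : N) :
    (M.sumInl : MixedGraph (N ⊕ N)).arrowAt (Sum.inl a) ↔ ∃ c, M.mark a c = some Mark.arrow := by
  constructor
  · rintro ⟨y, hy⟩
    cases y with
    | inl c => exact ⟨c, hy⟩
    | inr c => rw [sumInl_mark_inl_inr] at hy; simp at hy
  · rintro ⟨c, hc⟩
    exact ⟨Sum.inl c, hc⟩

lemma sumInl_undirAt_iff (M : MixedGraph N) (a : N) :
    (∃ c, (M.sumInl : MixedGraph (N ⊕ N)).undir (Sum.inl a) c) ↔ ∃ c, M.undir a c := by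
  constructor
  · rintro ⟨y, hy⟩
    cases y with
    | inl c => exact ⟨c, hy⟩
    | inr c => rw [MixedGraph.undir, sumInl_mark_inl_inr] at hy; simp at hy
  · rintro ⟨c, hc⟩
    exact ⟨Sum.inl c, hc⟩

/-- Lift a walk of `M` to `M.sumInl`. -/
def liftW {M : MixedGraph N} (w : GWalk M) : GWalk (M.sumInl : MixedGraph (N ⊕ N)) :=
  ⟨w.len, fun k => Sum.inl (w.f k), fun i hi => w.hadj i hi⟩

@[simp] lemma liftW_len {M : MixedGraph N} (w : GWalk M) : (liftW w).len = w.len := rfl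
@[simp] lemma liftW_f {M : MixedGraph N} (w : GWalk M) (k : ℕ) :
    (liftW w).f k = Sum.inl (w.f k) := rfl

lemma sumInl_walk_inl {M : MixedGraph N} {w : GWalk (M.sumInl : MixedGraph (N ⊕ N))}
    (hlen : 0 < w.len) : ∀ i, i ≤ w.len → ∃ x, w.f i = Sum.inl x := by
  intro i hi
  rcases lt_or_ge i w.len with h | h
  · obtain ⟨u, v, hu, _⟩ := sumInl_mark_isSome (w.hadj i h)
    exact ⟨u, hu⟩
  · have hi' : i = w.len := by omega
    obtain ⟨_, v, _, hv⟩ := sumInl_mark_isSome (w.hadj (w.len - 1) (by omega))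
    have h2 : w.len - 1 + 1 = i := by omega
    rw [h2] at hv
    exact ⟨v, hv⟩

/-- Project a walk of `M.sumInl` down to `M`. -/
def projW {M : MixedGraph N} (w : GWalk (M.sumInl : MixedGraph (N ⊕ N)))
    (hlen : 0 < w.len) : GWalk M :=
  ⟨w.len, fun k => Sum.elim id id (w.f k), by
    intro i hi
    obtain ⟨x, hx⟩ := sumInl_walk_inl hlen i (le_of_lt hi)
    obtain ⟨y, hy⟩ := sumInl_walk_inl hlen (i + 1) hi
    have := w.hadj i hi
    rw [hx, hy] at this
    show M.adj (Sum.elim id id (w.f i)) (Sum.elim id id (w.f (i + 1)))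
    rw [hx, hy]
    exact this⟩

@[simp] lemma projW_len {M : MixedGraph N} (w : GWalk (M.sumInl : MixedGraph (N ⊕ N)))
    (hlen : 0 < w.len) : (projW w hlen).len = w.len := rfl

lemma projW_f {M : MixedGraph N} (w : GWalk (M.sumInl : MixedGraph (N ⊕ N)))
    (hlen : 0 < w.len) {k : ℕ} {x : N} (hx : w.f k = Sum.inl x) : (projW w hlen).f k = x := by
  show Sum.elim id id (w.f k) = x
  rw [hx]
  rfl


lemma sumInl_dir_iff (M : MixedGraph N) (u v : N) :
    (M.sumInl : MixedGraph (N ⊕ N)).dir (Sum.inl u) (Sum.inl v) ↔ M.dir u v := Iff.rfl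

lemma sumInl_bidir_iff (M : MixedGraph N) (u v : N) :
    (M.sumInl : MixedGraph (N ⊕ N)).bidir (Sum.inl u) (Sum.inl v) ↔ M.bidir u v := Iff.rfl

lemma sumInl_undir_iff (M : MixedGraph N) (u v : N) :
    (M.sumInl : MixedGraph (N ⊕ N)).undir (Sum.inl u) (Sum.inl v) ↔ M.undir u v := Iff.rfl

lemma visibleCond_sumInl (M : MixedGraph N) (a v : N) :
    (M.sumInl : MixedGraph (N ⊕ N)).VisibleCond (Sum.inl a) (Sum.inl v) ↔ M.VisibleCond a v := by
  constructor
  · rintro (h | ⟨c, hcv, hcadj, hor⟩)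
    · exact Or.inl (mem_inl_image_iff.mp h)
    · rcases hor with h | ⟨w, hP, hlen2, hfst, hlst, hm1, hbid, hdir⟩
      · cases c with
        | inl c' =>
          refine Or.inr ⟨c', fun he => hcv (by rw [he]), fun hadj => hcadj hadj, Or.inl h⟩
        | inr c' =>
          rw [sumInl_mark_inl_inr] at h
          cases h
      · have hlen : 0 < w.len := by omega
        have hInl := sumInl_walk_inl hlen
        obtain ⟨c0, hc0⟩ := hInl 0 (by omega)
        obtain ⟨x1, hx1⟩ := hInl 1 (by omega)
        obtain ⟨xl, hxl⟩ := hInl w.len le_rfl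
        have hxla : xl = a := by
          rw [last_def, hxl] at hlst
          exact Sum.inl.inj hlst
        have hcval : c = Sum.inl c0 := by rw [← hfst, first_def, hc0]
        subst hcval
        refine Or.inr ⟨c0, fun he => hcv (by rw [he]), fun hadj => hcadj hadj, Or.inr ?_⟩
        refine ⟨projW w hlen, ?_, by simpa using hlen2, ?_, ?_, ?_, ?_, ?_⟩
        · intro i hi j hj heq
          obtain ⟨xi, hxi⟩ := hInl i hi
          obtain ⟨xj, hxj⟩ := hInl j hj
          rw [projW_f w hlen hxi, projW_f w hlen hxj] at heq
          exact hP i hi j hj (by rw [hxi, hxj, heq])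
        · rw [first_def, projW_f w hlen hc0]
        · rw [last_def]
          show (projW w hlen).f ((projW w hlen).len) = a
          rw [show (projW w hlen).len = w.len from rfl, projW_f w hlen hxl, hxla]
        · rw [projW_f w hlen hx1, projW_f w hlen hc0]
          rw [hx1, hc0] at hm1
          exact hm1
        · intro i h1 h2
          rw [projW_len] at h2
          obtain ⟨xi, hxi⟩ := hInl i (by omega)
          obtain ⟨xi1, hxi1⟩ := hInl (i + 1) (by omega)
          rw [projW_f w hlen hxi, projW_f w hlen hxi1]
          have := hbid i h1 (by omega)
          rw [hxi, hxi1] at this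
          exact this
        · intro i h1 h2
          rw [projW_len] at h2
          obtain ⟨xi, hxi⟩ := hInl i (by omega)
          rw [projW_f w hlen hxi]
          have := hdir i h1 (by omega)
          rw [hxi] at this
          exact this
  · rintro (h | ⟨c, hcv, hcadj, hor⟩)
    · exact Or.inl (mem_inl_image_iff.mpr h)
    · refine Or.inr ⟨Sum.inl c, fun he => hcv (Sum.inl.inj he), fun hadj => hcadj hadj, ?_⟩
      rcases hor with h | ⟨w, hP, hlen2, hfst, hlst, hm1, hbid, hdir⟩
      · exact Or.inl h
      · refine Or.inr ⟨liftW w, ?_, by simpa using hlen2, ?_, ?_, ?_, ?_, ?_⟩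
        · intro i hi j hj heq
          exact hP i hi j hj (Sum.inl.inj heq)
        · rw [first_def, liftW_f, ← first_def, hfst]
        · show Sum.inl (w.f w.len) = Sum.inl a
          rw [← last_def, hlst]
        · exact hm1
        · intro i h1 h2
          exact hbid i h1 h2
        · intro i h1 h2
          exact hdir i h1 h2


lemma inr_notMem_inl_image {s : Set N} {a : N} : (Sum.inr a : N ⊕ N) ∉ Sum.inl '' s := by
  simp

lemma sumInl_outputs (M : MixedGraph N) :
    (M.sumInl : MixedGraph (N ⊕ N)).outputs = Sum.inl '' M.outputs := rfl

lemma sumInl_inputs (M : MixedGraph N) :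
    (M.sumInl : MixedGraph (N ⊕ N)).inputs = Sum.inl '' M.inputs := rfl

/-! ### `magSoftTarget` computations -/

lemma target_inr (M : MixedGraph N) (a b : N) :
    magSoftTarget (M.sumInl : MixedGraph (N ⊕ N)) a (Sum.inr b) = none := by
  unfold magSoftTarget
  rw [if_neg (by simp : (Sum.inr b : N ⊕ N) ≠ Sum.inl a)]
  rw [if_neg (fun h => inr_notMem_inl_image h.1)]
  rw [if_neg (fun h => inr_notMem_inl_image h.1)]

lemma target_self_arrow {M : MixedGraph N} {a : N} (h : ∃ c, M.mark a c = some Mark.arrow) :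
    magSoftTarget (M.sumInl : MixedGraph (N ⊕ N)) a (Sum.inl a) = some Mark.arrow := by
  unfold magSoftTarget
  rw [if_pos rfl, if_pos ((sumInl_arrowAt_iff M a).mpr h)]

lemma target_self_tail {M : MixedGraph N} {a : N} (h1 : ¬ ∃ c, M.mark a c = some Mark.arrow)
    (h2 : ∃ c, M.undir a c) :
    magSoftTarget (M.sumInl : MixedGraph (N ⊕ N)) a (Sum.inl a) = some Mark.tail := by
  unfold magSoftTarget
  rw [if_pos rfl, if_neg (fun h => h1 ((sumInl_arrowAt_iff M a).mp h)),
    if_pos ((sumInl_undirAt_iff M a).mpr h2)]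

lemma target_self_circle {M : MixedGraph N} {a : N} (h1 : ¬ ∃ c, M.mark a c = some Mark.arrow)
    (h2 : ¬ ∃ c, M.undir a c) :
    magSoftTarget (M.sumInl : MixedGraph (N ⊕ N)) a (Sum.inl a) = some Mark.circle := by
  unfold magSoftTarget
  rw [if_pos rfl, if_neg (fun h => h1 ((sumInl_arrowAt_iff M a).mp h)),
    if_neg (fun h => h2 ((sumInl_undirAt_iff M a).mp h))]

lemma target_self_isSome (M : MixedGraph N) (a : N) :
    (magSoftTarget (M.sumInl : MixedGraph (N ⊕ N)) a (Sum.inl a)).isSome := by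
  by_cases h1 : ∃ c, M.mark a c = some Mark.arrow
  · rw [target_self_arrow h1]; rfl
  · by_cases h2 : ∃ c, M.undir a c
    · rw [target_self_tail h1 h2]; rfl
    · rw [target_self_circle h1 h2]; rfl

lemma target_ne_arrow_iff {M : MixedGraph N} {a v : N} (hv : v ≠ a) :
    magSoftTarget (M.sumInl : MixedGraph (N ⊕ N)) a (Sum.inl v) = some Mark.arrow ↔
      (v ∈ M.outputs ∧ M.dir a v ∧ ¬ M.VisibleCond a v) := by
  unfold magSoftTarget
  rw [if_neg (by simp [hv] : (Sum.inl v : N ⊕ N) ≠ Sum.inl a)]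
  by_cases h : v ∈ M.outputs ∧ M.dir a v ∧ ¬ M.VisibleCond a v
  · rw [if_pos ⟨mem_inl_image_iff.mpr h.1, (sumInl_dir_iff M a v).mpr h.2.1,
      fun hh => h.2.2 ((visibleCond_sumInl M a v).mp hh)⟩]
    simp [h]
  · rw [if_neg (fun hh => h ⟨mem_inl_image_iff.mp hh.1, (sumInl_dir_iff M a v).mp hh.2.1,
      fun hhh => hh.2.2 ((visibleCond_sumInl M a v).mpr hhh)⟩)]
    constructor
    · intro hh
      split_ifs at hh <;> cases hh
    · intro hh
      exact absurd hh h

lemma target_ne_tail_iff {M : MixedGraph N} {a v : N} (hv : v ≠ a) :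
    magSoftTarget (M.sumInl : MixedGraph (N ⊕ N)) a (Sum.inl v) = some Mark.tail ↔
      (v ∈ M.outputs ∧ M.undir a v) := by
  unfold magSoftTarget
  rw [if_neg (by simp [hv] : (Sum.inl v : N ⊕ N) ≠ Sum.inl a)]
  by_cases h : v ∈ M.outputs ∧ M.dir a v ∧ ¬ M.VisibleCond a v
  · rw [if_pos ⟨mem_inl_image_iff.mpr h.1, (sumInl_dir_iff M a v).mpr h.2.1,
      fun hh => h.2.2 ((visibleCond_sumInl M a v).mp hh)⟩]
    constructor
    · intro hh; cases hh
    · rintro ⟨_, hu⟩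
      exact absurd hu.2 (by rw [h.2.1.2]; simp)
  · rw [if_neg (fun hh => h ⟨mem_inl_image_iff.mp hh.1, (sumInl_dir_iff M a v).mp hh.2.1,
      fun hhh => hh.2.2 ((visibleCond_sumInl M a v).mpr hhh)⟩)]
    by_cases h2 : v ∈ M.outputs ∧ M.undir a v
    · rw [if_pos ⟨mem_inl_image_iff.mpr h2.1, (sumInl_undir_iff M a v).mpr h2.2⟩]
      simp [h2]
    · rw [if_neg (fun hh => h2 ⟨mem_inl_image_iff.mp hh.1, (sumInl_undir_iff M a v).mp hh.2⟩)]
      constructor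
      · intro hh
        cases hh
      · intro hh
        exact absurd hh h2


lemma target_ne_isSome_iff {M : MixedGraph N} {a v : N} (hv : v ≠ a) :
    (magSoftTarget (M.sumInl : MixedGraph (N ⊕ N)) a (Sum.inl v)).isSome ↔
      (v ∈ M.outputs ∧ ((M.dir a v ∧ ¬ M.VisibleCond a v) ∨ M.undir a v)) := by
  constructor
  · intro h
    rw [Option.isSome_iff_exists] at h
    obtain ⟨m, hm⟩ := h
    cases m with
    | tail =>
      obtain ⟨h1, h2⟩ := (target_ne_tail_iff hv).mp hm
      exact ⟨h1, Or.inr h2⟩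
    | arrow =>
      obtain ⟨h1, h2, h3⟩ := (target_ne_arrow_iff hv).mp hm
      exact ⟨h1, Or.inl ⟨h2, h3⟩⟩
    | circle =>
      exfalso
      unfold magSoftTarget at hm
      rw [if_neg (by simp [hv] : (Sum.inl v : N ⊕ N) ≠ Sum.inl a)] at hm
      split_ifs at hm <;> cases hm
  · rintro ⟨h1, h2 | h2⟩
    · rw [(target_ne_arrow_iff hv).mpr ⟨h1, h2⟩]; rfl
    · rw [(target_ne_tail_iff hv).mpr ⟨h1, h2⟩]; rfl

/-! ### `magSoftManip` mark computations -/

lemma gg_inl_inl (M : MixedGraph N) (D : Set N) (u v : N) :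
    (magSoftManip M D).mark (Sum.inl u) (Sum.inl v) = M.mark u v := rfl

lemma gg_cond_iff {M : MixedGraph N} {D : Set N} {a : N} :
    (a ∈ D ∧ Sum.inl a ∉ (M.sumInl : MixedGraph (N ⊕ N)).inputs) ↔ (a ∈ D ∧ a ∉ M.inputs) := by
  constructor
  · rintro ⟨h1, h2⟩
    exact ⟨h1, fun h => h2 (mem_inl_image_iff.mpr h)⟩
  · rintro ⟨h1, h2⟩
    exact ⟨h1, fun h => h2 (mem_inl_image_iff.mp h)⟩

lemma gg_inr_inl {M : MixedGraph N} {D : Set N} {a : N} (ha : a ∈ D ∧ a ∉ M.inputs) (v : N) :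
    (magSoftManip M D).mark (Sum.inr a) (Sum.inl v) =
      if (magSoftTarget (M.sumInl : MixedGraph (N ⊕ N)) a (Sum.inl v)).isSome
      then some Mark.tail else none := by
  show (if a ∈ D ∧ Sum.inl a ∉ (M.sumInl : MixedGraph (N ⊕ N)).inputs then _ else _) = _
  rw [if_pos (gg_cond_iff.mpr ha)]

lemma gg_inr_inl_not {M : MixedGraph N} {D : Set N} {a : N} (ha : ¬ (a ∈ D ∧ a ∉ M.inputs))
    (v : N) : (magSoftManip M D).mark (Sum.inr a) (Sum.inl v) = none := by
  show (if a ∈ D ∧ Sum.inl a ∉ (M.sumInl : MixedGraph (N ⊕ N)).inputs then _ else _) = _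
  rw [if_neg (fun h => ha (gg_cond_iff.mp h))]
  exact sumInl_mark_inr M a (Sum.inl v)

lemma gg_inl_inr {M : MixedGraph N} {D : Set N} {a : N} (ha : a ∈ D ∧ a ∉ M.inputs) (v : N) :
    (magSoftManip M D).mark (Sum.inl v) (Sum.inr a) =
      magSoftTarget (M.sumInl : MixedGraph (N ⊕ N)) a (Sum.inl v) := by
  show (if a ∈ D ∧ Sum.inl a ∉ (M.sumInl : MixedGraph (N ⊕ N)).inputs then _ else _) = _
  rw [if_pos (gg_cond_iff.mpr ha)]

lemma gg_inl_inr_not {M : MixedGraph N} {D : Set N} {a : N} (ha : ¬ (a ∈ D ∧ a ∉ M.inputs))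
    (v : N) : (magSoftManip M D).mark (Sum.inl v) (Sum.inr a) = none := by
  show (if a ∈ D ∧ Sum.inl a ∉ (M.sumInl : MixedGraph (N ⊕ N)).inputs then _ else _) = _
  rw [if_neg (fun h => ha (gg_cond_iff.mp h))]
  exact sumInl_mark_inl_inr M v a

lemma gg_inr_inr (M : MixedGraph N) (D : Set N) (a b : N) :
    (magSoftManip M D).mark (Sum.inr a) (Sum.inr b) = none := by
  show (if a ∈ D ∧ Sum.inl a ∉ (M.sumInl : MixedGraph (N ⊕ N)).inputs then
      (if (magSoftTarget (M.sumInl : MixedGraph (N ⊕ N)) a (Sum.inr b)).isSome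
        then some Mark.tail else none)
    else if b ∈ D ∧ Sum.inl b ∉ (M.sumInl : MixedGraph (N ⊕ N)).inputs then
      magSoftTarget (M.sumInl : MixedGraph (N ⊕ N)) b (Sum.inr a)
    else (M.sumInl : MixedGraph (N ⊕ N)).mark (Sum.inr a) (Sum.inr b)) = none
  by_cases h1 : a ∈ D ∧ Sum.inl a ∉ (M.sumInl : MixedGraph (N ⊕ N)).inputs
  · rw [if_pos h1, target_inr]
    rfl
  · rw [if_neg h1]
    by_cases h2 : b ∈ D ∧ Sum.inl b ∉ (M.sumInl : MixedGraph (N ⊕ N)).inputs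
    · rw [if_pos h2]
      exact target_inr M b a
    · rw [if_neg h2]
      exact sumInl_mark_inr M a (Sum.inr b)

lemma gg_inputs (M : MixedGraph N) (D : Set N) :
    (magSoftManip M D).inputs =
      Sum.inl '' M.inputs ∪ Sum.inr '' {a | a ∈ D ∧ a ∉ M.inputs} := by
  show Sum.inl '' M.inputs ∪ Sum.inr '' {a | a ∈ D ∧ Sum.inl a ∉ (M.sumInl : MixedGraph (N ⊕ N)).inputs} = _
  have h : {a | a ∈ D ∧ Sum.inl a ∉ (M.sumInl : MixedGraph (N ⊕ N)).inputs} =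
      {a | a ∈ D ∧ a ∉ M.inputs} := by
    ext a
    exact gg_cond_iff
  rw [h]

lemma gg_outputs (M : MixedGraph N) (D : Set N) :
    (magSoftManip M D).outputs = Sum.inl '' M.outputs := rfl


/-! ### `admgSoftManip` computations and transfers -/

variable {AG : MixedGraph N} {DS : Set N}

lemma gd_inl_inl (AG : MixedGraph N) (DS : Set N) (u v : N) :
    (admgSoftManip AG DS).mark (Sum.inl u) (Sum.inl v) = AG.mark u v := rfl

lemma gd_inr_inl (AG : MixedGraph N) (DS : Set N) (e u : N) :
    (admgSoftManip AG DS).mark (Sum.inr e) (Sum.inl u) =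
      if e ∈ DS ∧ u = e then some Mark.tail else none := rfl

lemma gd_inl_inr (AG : MixedGraph N) (DS : Set N) (e u : N) :
    (admgSoftManip AG DS).mark (Sum.inl u) (Sum.inr e) =
      if e ∈ DS ∧ u = e then some Mark.arrow else none := rfl

lemma gd_inr_inr (AG : MixedGraph N) (DS : Set N) (e f : N) :
    (admgSoftManip AG DS).mark (Sum.inr e) (Sum.inr f) = none := rfl

lemma gd_no_arrow_at_inr (AG : MixedGraph N) (DS : Set N) (e : N) (y : N ⊕ N) :
    (admgSoftManip AG DS).mark (Sum.inr e) y ≠ some Mark.arrow := by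
  cases y with
  | inl u =>
    rw [gd_inr_inl]
    split_ifs
    · simp
    · simp
  | inr u =>
    rw [gd_inr_inr]
    simp

lemma gd_dir_cases {x y : N ⊕ N} (h : (admgSoftManip AG DS).dir x y) :
    (∃ u v, x = Sum.inl u ∧ y = Sum.inl v ∧ AG.dir u v) ∨
      (∃ e, e ∈ DS ∧ x = Sum.inr e ∧ y = Sum.inl e) := by
  obtain ⟨h1, h2⟩ := h
  cases x with
  | inl u =>
    cases y with
    | inl v => exact Or.inl ⟨u, v, rfl, rfl, h1, h2⟩
    | inr e => exact absurd h2 (gd_no_arrow_at_inr AG DS e (Sum.inl u))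
  | inr e =>
    cases y with
    | inl v =>
      rw [gd_inr_inl] at h1
      split_ifs at h1 with hc
      exact Or.inr ⟨e, hc.1, rfl, by rw [hc.2]⟩
    | inr f =>
      rw [gd_inr_inr] at h1
      simp at h1

lemma gd_dir_inl {u : N} {t : N ⊕ N} (h : (admgSoftManip AG DS).dir (Sum.inl u) t) :
    ∃ v, t = Sum.inl v ∧ AG.dir u v := by
  rcases gd_dir_cases h with ⟨u', v, hu, hv, hd⟩ | ⟨e, _, hx, _⟩
  · cases hu
    exact ⟨v, hv, hd⟩
  · cases hx

lemma gd_anc_inl {u : N} {t : N ⊕ N} (h : (admgSoftManip AG DS).anc (Sum.inl u) t) :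
    ∃ v, t = Sum.inl v ∧ AG.anc u v := by
  induction h with
  | refl => exact ⟨u, rfl, Relation.ReflTransGen.refl⟩
  | tail h1 h2 ih =>
    obtain ⟨v, rfl, hv⟩ := ih
    obtain ⟨w, rfl, hw⟩ := gd_dir_inl h2
    exact ⟨w, rfl, hv.tail hw⟩

lemma gd_anc_lift {u v : N} (h : AG.anc u v) :
    (admgSoftManip AG DS).anc (Sum.inl u) (Sum.inl v) := by
  induction h with
  | refl => exact Relation.ReflTransGen.refl
  | tail h1 h2 ih => exact ih.tail ⟨h2.1, h2.2⟩

lemma gd_ancSet_inl {u b : N} {S : Set N} :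
    Sum.inl u ∈ (admgSoftManip AG DS).ancSet ({Sum.inl b} ∪ Sum.inl '' S) ↔
      u ∈ AG.ancSet ({b} ∪ S) := by
  constructor
  · rintro ⟨t, ht, hanc⟩
    obtain ⟨v, rfl, hv⟩ := gd_anc_inl hanc
    rcases ht with ht | ht
    · rw [Set.mem_singleton_iff] at ht
      exact ⟨b, Or.inl rfl, (Sum.inl.inj ht) ▸ hv⟩
    · obtain ⟨s, hs, hsv⟩ := ht
      exact ⟨v, Or.inr ((Sum.inl.inj hsv) ▸ hs), hv⟩
  · rintro ⟨s, hs, hanc⟩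
    rcases hs with hs | hs
    · rw [Set.mem_singleton_iff] at hs
      exact ⟨Sum.inl s, Or.inl (Set.mem_singleton_iff.mpr (by rw [hs])), gd_anc_lift hanc⟩
    · exact ⟨Sum.inl s, Or.inr ⟨s, hs, rfl⟩, gd_anc_lift hanc⟩

lemma gd_ancSet_pair {u d b : N} {S : Set N} :
    Sum.inl u ∈ (admgSoftManip AG DS).ancSet
        (({Sum.inr d, Sum.inl b} : Set (N ⊕ N)) ∪ Sum.inl '' S) ↔
      u ∈ AG.ancSet ({b} ∪ S) := by
  constructor
  · rintro ⟨t, ht, hanc⟩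
    obtain ⟨v, rfl, hv⟩ := gd_anc_inl hanc
    simp only [Set.mem_union, Set.mem_insert_iff, Set.mem_singleton_iff] at ht
    rcases ht with (ht | ht) | ht
    · cases ht
    · exact ⟨b, Or.inl rfl, (Sum.inl.inj ht) ▸ hv⟩
    · obtain ⟨s, hs, hsv⟩ := ht
      exact ⟨v, Or.inr ((Sum.inl.inj hsv) ▸ hs), hv⟩
  · rintro ⟨s, hs, hanc⟩
    rcases hs with hs | hs
    · rw [Set.mem_singleton_iff] at hs
      exact ⟨Sum.inl s, Or.inl (by simp [hs]), gd_anc_lift hanc⟩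
    · exact ⟨Sum.inl s, Or.inr ⟨s, hs, rfl⟩, gd_anc_lift hanc⟩

/-- Lift a walk of `AG` to `admgSoftManip AG DS`. -/
def liftGdW (AG : MixedGraph N) (DS : Set N) (w : GWalk AG) : GWalk (admgSoftManip AG DS) :=
  ⟨w.len, fun k => Sum.inl (w.f k), fun i hi => w.hadj i hi⟩

@[simp] lemma liftGdW_len (w : GWalk AG) : (liftGdW AG DS w).len = w.len := rfl
@[simp] lemma liftGdW_f (w : GWalk AG) (k : ℕ) : (liftGdW AG DS w).f k = Sum.inl (w.f k) := rfl


/-! ### ancestor-set conversions -/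

lemma ancSet_pair_right {G : MixedGraph N} {x b c : N} {S : Set N}
    (h : x ∈ G.ancSet ({b} ∪ S)) : x ∈ G.ancSet ({c, b} ∪ S) := by
  apply ancSet_mono _ h
  rintro t (ht | ht)
  · exact Or.inl (Set.mem_insert_iff.mpr (Or.inr ht))
  · exact Or.inr ht

lemma ancSet_pair_left {G : MixedGraph N} {x b c : N} {S : Set N}
    (h : x ∈ G.ancSet ({c} ∪ S)) : x ∈ G.ancSet ({c, b} ∪ S) := by
  apply ancSet_mono _ h
  rintro t (ht | ht)
  · exact Or.inl (Set.mem_insert_iff.mpr (Or.inl (Set.mem_singleton_iff.mp ht)))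
  · exact Or.inr ht

lemma collider_set_conv {G : MixedGraph N} {x p q b c : N} {S : Set N}
    (h : x ∈ G.ancSet ({p, q} ∪ S))
    (hp : p ∈ G.ancSet ({b} ∪ S)) (hq : q ∈ G.ancSet ({b} ∪ S)) :
    x ∈ G.ancSet ({c, b} ∪ S) := by
  obtain ⟨t, ht, hanc⟩ := h
  simp only [Set.mem_union, Set.mem_insert_iff, Set.mem_singleton_iff] at ht
  rcases ht with (rfl | rfl) | ht
  · exact ancSet_pair_right (anc_mem_ancSet hanc hp)
  · exact ancSet_pair_right (anc_mem_ancSet hanc hq)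
  · exact ⟨t, Or.inr ht, hanc⟩

lemma collider_set_conv_c {G : MixedGraph N} {x p q b : N} {S : Set N}
    (h : x ∈ G.ancSet ({p, q} ∪ S)) (hq : q ∈ G.ancSet ({b} ∪ S)) :
    x ∈ G.ancSet ({p, b} ∪ S) := by
  obtain ⟨t, ht, hanc⟩ := h
  simp only [Set.mem_union, Set.mem_insert_iff, Set.mem_singleton_iff] at ht
  rcases ht with (rfl | rfl) | ht
  · exact ⟨t, Or.inl (Set.mem_insert _ _), hanc⟩
  · exact ancSet_pair_right (anc_mem_ancSet hanc hq)
  · exact ⟨t, Or.inr ht, hanc⟩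

/-! ### lifting single iMAG edges to inducing paths of the isADMG -/

lemma edge_lift {M : MixedGraph N} (hM : M.IsIMAG) {A : SADMG N} (hA : A.WF)
    (hrep : RepresentsS M A) {p q : N} (hadj : M.adj p q)
    (hqp : M.mark q p = some Mark.arrow) :
    ∃ R : GWalk A.graph, 0 < R.len ∧ R.f 0 = p ∧ R.f R.len = q ∧
      (∀ i, 0 < i → i < R.len → R.ColliderAt i ∧
        R.f i ∈ A.graph.ancSet ({p, q} ∪ A.sel)) ∧
      A.graph.mark q (R.f (R.len - 1)) = some Mark.arrow ∧
      (M.mark p q = some Mark.arrow → A.graph.mark p (R.f 1) = some Mark.arrow) := by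
  have hwfM := hM.1.1
  have hAwf := hA.1.1
  have hne := ne_of_adj hwfM hadj
  have hnodes := hwfM.2.2.2.2.2 p q hadj
  obtain ⟨hnb, hpath⟩ := (hrep.2.2.1 p q hne hnodes.1 hnodes.2).mp hadj
  obtain ⟨R, hRp, hRf, hRl, hRw⟩ := hpath
  rw [first_def] at hRf
  rw [last_def] at hRl
  have hRlen : 0 < R.len := by
    by_contra hcon
    have h0 : R.len = 0 := by omega
    rw [h0] at hRl
    exact hne (by rw [← hRf, ← hRl])
  have hcol := inducing_colliders hRw
  rw [first_def, last_def, hRf, hRl] at hcol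
  refine ⟨R, hRlen, hRf, hRl, hcol, ?_, ?_⟩
  · -- arrowhead at the `q` end
    have hqna : q ∉ A.graph.ancSet ({p} ∪ A.sel) := hrep.2.2.2.1 q p hqp
    have hrw := inducing_reverse hAwf hRw
    have hrep0 : (reverseW hAwf R).f 0 = q := by
      rw [reverseW_f, Nat.sub_zero, hRl]
    have hrepl : (reverseW hAwf R).f (reverseW hAwf R).len = p := by
      rw [reverseW_len, reverseW_f, Nat.sub_self, hRf]
    have := repair_start hA.1 (by rw [reverseW_len]; exact hRlen) hrw
      (by rw [hrep0, hrepl]; exact hqna)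
    rw [hrep0] at this
    have h1 : (reverseW hAwf R).f 1 = R.f (R.len - 1) := reverseW_f hAwf R 1
    rw [h1] at this
    exact this
  · intro hpq
    have hpna : p ∉ A.graph.ancSet ({q} ∪ A.sel) := hrep.2.2.2.1 p q hpq
    have := repair_start hA.1 hRlen hRw (by rw [hRf, hRl]; exact hpna)
    rw [hRf] at this
    exact this


/-- Key A-level lemma: an inducing walk from `d` to `b` *into* `d` forces the
`M`-edge `d − b` or an invisible `d → b`. -/
lemma keyA {M : MixedGraph N} (hM : M.IsIMAG) {A : SADMG N} (hA : A.WF)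
    (hrep : RepresentsS M A) {d b : N} (hdb : d ≠ b)
    (hdin : d ∉ M.inputs) (hbin : b ∉ M.inputs)
    (hdnode : d ∈ M.nodes) (hbnode : b ∈ M.nodes)
    (P : GWalk A.graph) (hPlen : 0 < P.len) (hP0 : P.f 0 = d) (hPl : P.f P.len = b)
    (hPar : A.graph.mark d (P.f 1) = some Mark.arrow)
    (hPcol : ∀ i, 0 < i → i < P.len →
      P.ColliderAt i ∧ P.f i ∈ A.graph.ancSet ({b} ∪ A.sel))
    (hdanc : d ∈ A.graph.ancSet ({b} ∪ A.sel)) :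
    M.mark d b = some Mark.tail ∧
      (M.undir d b ∨ (M.dir d b ∧ ¬ M.VisibleCond d b)) := by
  have hwfM := hM.1.1
  have hAwf := hA.1.1
  have r3 := hrep.2.2.1
  have r4 := hrep.2.2.2.1
  have r5 := hrep.2.2.2.2
  have hPind : A.graph.InducingWalk ∅ A.sel P := by
    apply mk_inducing
    intro i h1 h2
    refine ⟨(hPcol i h1 h2).1, ?_⟩
    rw [first_def, last_def, hP0, hPl]
    exact ancSet_pair_right (hPcol i h1 h2).2
  have hMadj : M.adj d b := by
    refine (r3 d b hdb hdnode hbnode).mpr ⟨fun hc => hdin hc.1, ?_⟩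
    exact inducing_walk_to_path ⟨P, by rw [first_def, hP0], by rw [last_def, hPl], hPind⟩
  have hmark : M.mark d b = some Mark.tail := by
    rcases mark_cases hM.2 hMadj with h | h
    · exact h
    · exact absurd hdanc (r4 d b h)
  refine ⟨hmark, ?_⟩
  rcases mark_cases hM.2 (adj_symm hwfM hMadj) with h | h
  · exact Or.inl ⟨hmark, h⟩
  refine Or.inr ⟨⟨hmark, h⟩, ?_⟩
  intro hvis
  rcases hvis with hin | ⟨c, hcb, hcnadj, hor⟩
  · exact hdin hin
  have finish : ∀ W : GWalk A.graph, W.f 0 = c → W.f W.len = b → c ∈ M.nodes →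
      (∀ i, 0 < i → i < W.len →
        W.ColliderAt i ∧ W.f i ∈ A.graph.ancSet ({c, b} ∪ A.sel)) → False := by
    intro W hW0 hWl hcnode hWcol
    have hind : A.graph.InducingWalk ∅ A.sel W := by
      apply mk_inducing
      intro i h1 h2
      refine ⟨(hWcol i h1 h2).1, ?_⟩
      rw [first_def, last_def, hW0, hWl]
      exact (hWcol i h1 h2).2
    have hpath := inducing_walk_to_path
      ⟨W, by rw [first_def, hW0], by rw [last_def, hWl], hind⟩
    have : M.adj c b := (r3 c b hcb hcnode hbnode).mpr ⟨fun hc' => hbin hc'.2, hpath⟩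
    exact hcnadj this
  rcases hor with harr | ⟨ω, hωP, hωlen2, hωfirst, hωlast, hωm1, hωbid, hωdir⟩
  · -- witness `c *→ d`
    have hadjdc : M.adj d c := adj_of_mark harr
    have hcnode : c ∈ M.nodes := (hwfM.2.2.2.2.2 d c hadjdc).2
    obtain ⟨R, hRlen, hR0, hRl, hRcol, hRend, _⟩ :=
      edge_lift hM hA hrep (adj_symm hwfM hadjdc) harr
    have hlast : R.last = P.first := by rw [last_def, first_def, hRl, hP0]
    have hWcol := appendW_colliders hlast ({c, b} ∪ A.sel)
      (fun i h1 h2 => ⟨(hRcol i h1 h2).1, collider_set_conv_c (hRcol i h1 h2).2 hdanc⟩)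
      (fun i h1 h2 => ⟨(hPcol i h1 h2).1, ancSet_pair_right (hPcol i h1 h2).2⟩)
      (fun _ _ => ⟨by rw [hP0]; exact hRend, by rw [hP0]; exact hPar,
        by rw [hP0]; exact ancSet_pair_right hdanc⟩)
    refine finish (appendW R P hlast) (by rw [appendW_f_le hlast (Nat.zero_le _), hR0])
      ?_ hcnode hWcol
    show (appendW R P hlast).f (R.len + P.len) = b
    rw [appendW_f_ge hlast (by omega), show R.len + P.len - R.len = P.len from by omega]
    exact hPl
  · -- witness collider chain into `d`
    have hω0 : ω.f 0 = c := by rw [← hωfirst]; rfl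
    have hωl : ω.f ω.len = d := by rw [← hωlast]; rfl
    have hkey : ∀ j, 1 ≤ j → j ≤ ω.len → ∃ W : GWalk A.graph, 0 < W.len ∧ W.f 0 = c ∧
        W.f W.len = ω.f j ∧
        (∀ i, 0 < i → i < W.len → W.ColliderAt i ∧
          W.f i ∈ A.graph.ancSet ({c, b} ∪ A.sel)) ∧
        A.graph.mark (ω.f j) (W.f (W.len - 1)) = some Mark.arrow := by
      intro j
      induction j with
      | zero => intro h; omega
      | succ j ih =>
        intro h1 h2
        have hanc1 : ω.f (j + 1) ∈ A.graph.ancSet ({b} ∪ A.sel) := by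
          rcases eq_or_lt_of_le h2 with he | hlt
          · rw [he, hωl]
            exact hdanc
          · exact r5 _ _ (hωdir (j + 1) (by omega) hlt).1
        rcases Nat.eq_or_lt_of_le h1 with hj | hj
        · have hj0 : j = 0 := by omega
          subst hj0
          have hmadj : M.adj c (ω.f 1) := by
            have hx : M.adj (ω.f 1) (ω.f 0) := adj_of_mark hωm1
            rw [hω0] at hx
            exact adj_symm hwfM hx
          obtain ⟨R, hRlen, hR0, hRl, hRcol, hRend, _⟩ :=
            edge_lift hM hA hrep hmadj (by rw [← hω0]; exact hωm1)
          exact ⟨R, hRlen, hR0, hRl,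
            fun i hh1 hh2 => ⟨(hRcol i hh1 hh2).1,
              collider_set_conv_c (hRcol i hh1 hh2).2 hanc1⟩, hRend⟩
        · have hjm : j < ω.len := by omega
          obtain ⟨W, hWlen, hW0, hWl, hWcol, hWend⟩ := ih (by omega) (by omega)
          have hbid := hωbid j (by omega) hjm
          obtain ⟨R, hRlen, hR0, hRl, hRcol, hRend, hRstart⟩ :=
            edge_lift hM hA hrep (adj_of_mark hbid.1) hbid.2
          have hancj : ω.f j ∈ A.graph.ancSet ({b} ∪ A.sel) :=
            r5 _ _ (hωdir j (by omega) hjm).1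
          have hlast : W.last = R.first := by rw [last_def, first_def, hWl, hR0]
          refine ⟨appendW W R hlast, by rw [appendW_len]; omega,
            by rw [appendW_f_le hlast (Nat.zero_le _), hW0], ?_, ?_, ?_⟩
          · show (appendW W R hlast).f (W.len + R.len) = ω.f (j + 1)
            rw [appendW_f_ge hlast (by omega),
              show W.len + R.len - W.len = R.len from by omega]
            exact hRl
          · exact appendW_colliders hlast _
              hWcol
              (fun i hh1 hh2 => ⟨(hRcol i hh1 hh2).1,
                collider_set_conv (hRcol i hh1 hh2).2 hancj hanc1⟩)
              (fun _ _ => ⟨by rw [hR0]; exact hWend, by rw [hR0]; exact hRstart hbid.1,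
                by rw [hR0]; exact ancSet_pair_right hancj⟩)
          · show A.graph.mark (ω.f (j + 1))
              ((appendW W R hlast).f (W.len + R.len - 1)) = some Mark.arrow
            rw [appendW_f_ge hlast (by omega),
              show W.len + R.len - 1 - W.len = R.len - 1 from by omega]
            exact hRend
    obtain ⟨W, hWlen, hW0, hWl, hWcol, hWend⟩ := hkey ω.len (by omega) le_rfl
    rw [hωl] at hWl hWend
    have hlast : W.last = P.first := by rw [last_def, first_def, hWl, hP0]
    have hWcol2 := appendW_colliders hlast ({c, b} ∪ A.sel) hWcol
      (fun i h1 h2 => ⟨(hPcol i h1 h2).1, ancSet_pair_right (hPcol i h1 h2).2⟩)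
      (fun _ _ => ⟨by rw [hP0]; exact hWend, by rw [hP0]; exact hPar,
        by rw [hP0]; exact ancSet_pair_right hdanc⟩)
    have hcnode : c ∈ M.nodes := by
      have hx : M.adj (ω.f 1) (ω.f 0) := adj_of_mark hωm1
      have h2 := (hwfM.2.2.2.2.2 _ _ hx).2
      rw [hω0] at h2
      exact h2
    refine finish (appendW W P hlast) (by rw [appendW_f_le hlast (Nat.zero_le _), hW0])
      ?_ hcnode hWcol2
    show (appendW W P hlast).f (W.len + P.len) = b
    rw [appendW_f_ge hlast (by omega), show W.len + P.len - W.len = P.len from by omega]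
    exact hPl


lemma gd_ancSet_pair2 {u a b : N} {S : Set N} :
    Sum.inl u ∈ (admgSoftManip AG DS).ancSet
        (({Sum.inl a, Sum.inl b} : Set (N ⊕ N)) ∪ Sum.inl '' S) ↔
      u ∈ AG.ancSet ({a, b} ∪ S) := by
  constructor
  · rintro ⟨t, ht, hanc⟩
    obtain ⟨v, rfl, hv⟩ := gd_anc_inl hanc
    simp only [Set.mem_union, Set.mem_insert_iff, Set.mem_singleton_iff] at ht
    rcases ht with (ht | ht) | ht
    · exact ⟨a, Or.inl (Set.mem_insert _ _), (Sum.inl.inj ht) ▸ hv⟩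
    · exact ⟨b, Or.inl (Set.mem_insert_iff.mpr (Or.inr rfl)), (Sum.inl.inj ht) ▸ hv⟩
    · obtain ⟨s, hs, hsv⟩ := ht
      exact ⟨v, Or.inr ((Sum.inl.inj hsv) ▸ hs), hv⟩
  · rintro ⟨s, hs, hanc⟩
    simp only [Set.mem_union, Set.mem_insert_iff, Set.mem_singleton_iff] at hs
    rcases hs with (rfl | rfl) | hs
    · exact ⟨Sum.inl s, Or.inl (Set.mem_insert _ _), gd_anc_lift hanc⟩
    · exact ⟨Sum.inl s, Or.inl (Set.mem_insert_iff.mpr (Or.inr rfl)), gd_anc_lift hanc⟩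
    · exact ⟨Sum.inl s, Or.inr ⟨s, hs, rfl⟩, gd_anc_lift hanc⟩

lemma proj_val {x : N ⊕ N} {u : N} (h : x = Sum.inl u) : Sum.elim id id x = u := by
  rw [h]; rfl

/-- Extract the underlying `A`-walk of an inducing path from `I_d` to `b` in the
soft manipulation. -/
lemma gd_path_extract {d b : N} (hbd : b ≠ d)
    {w : GWalk (admgSoftManip AG DS)} (hP : w.IsPath)
    (hf : w.f 0 = Sum.inr d) (hl : w.f w.len = Sum.inl b) {S : Set N}
    (hw : (admgSoftManip AG DS).InducingWalk ∅ (Sum.inl '' S) w) :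
    ∃ P : GWalk AG, 0 < P.len ∧ P.f 0 = d ∧ P.f P.len = b ∧
      AG.mark d (P.f 1) = some Mark.arrow ∧
      (∀ i, 0 < i → i < P.len → P.ColliderAt i ∧ P.f i ∈ AG.ancSet ({b} ∪ S)) ∧
      d ∈ AG.ancSet ({b} ∪ S) := by
  have hcol := inducing_colliders hw
  have hlen1 : 0 < w.len := by
    by_contra hcon
    have h0 : w.len = 0 := by omega
    rw [h0, hf] at hl
    cases hl
  have hlen2 : 2 ≤ w.len := by
    by_contra hcon
    have h1 : w.len = 1 := by omega
    have := w.hadj 0 hlen1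
    rw [hf, show w.f 1 = Sum.inl b from by rw [← h1, hl]] at this
    rw [MixedGraph.adj, gd_inr_inl] at this
    split_ifs at this with hc
    · exact hbd hc.2
    · simp at this
  have hInl : ∀ i, 1 ≤ i → i ≤ w.len → ∃ x, w.f i = Sum.inl x := by
    intro i h1 h2
    rcases eq_or_lt_of_le h2 with he | hlt
    · exact ⟨b, by rw [he, hl]⟩
    · have hc := (hcol i h1 hlt).1
      cases hx : w.f i with
      | inl x => exact ⟨x, rfl⟩
      | inr x =>
        exfalso
        have h3 := hc.1
        rw [hx] at h3
        exact gd_no_arrow_at_inr AG DS x _ h3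
  have hw1 : w.f 1 = Sum.inl d := by
    obtain ⟨x, hx⟩ := hInl 1 le_rfl (by omega)
    have := w.hadj 0 hlen1
    rw [hf, hx, MixedGraph.adj, gd_inr_inl] at this
    split_ifs at this with hc
    · rw [hx, hc.2]
    · simp at this
  have hancconv : ∀ i, 0 < i → i < w.len → ∀ x, w.f i = Sum.inl x →
      x ∈ AG.ancSet ({b} ∪ S) := by
    intro i h1 h2 x hx
    have h3 := (hcol i h1 h2).2
    rw [first_def, last_def, hf, hl, hx] at h3
    exact gd_ancSet_pair.mp h3
  have hdanc : d ∈ AG.ancSet ({b} ∪ S) := hancconv 1 one_pos (by omega) d hw1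
  have hadjP : ∀ i, i < w.len - 1 →
      AG.adj (Sum.elim id id (w.f (i + 1))) (Sum.elim id id (w.f (i + 1 + 1))) := by
    intro i hi
    obtain ⟨x, hx⟩ := hInl (i + 1) (by omega) (by omega)
    obtain ⟨y, hy⟩ := hInl (i + 1 + 1) (by omega) (by omega)
    rw [proj_val hx, proj_val hy]
    have := w.hadj (i + 1) (by omega)
    rw [hx, hy] at this
    exact this
  set P : GWalk AG := ⟨w.len - 1, fun k => Sum.elim id id (w.f (k + 1)), hadjP⟩ with hPdef
  have hPlen : P.len = w.len - 1 := rfl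
  have hPf : ∀ k, P.f k = Sum.elim id id (w.f (k + 1)) := fun _ => rfl
  refine ⟨P, by rw [hPlen]; omega, ?_, ?_, ?_, ?_, hdanc⟩
  · rw [hPf, proj_val hw1]
  · rw [hPlen, hPf, show w.len - 1 + 1 = w.len from by omega, proj_val hl]
  · obtain ⟨y, hy⟩ := hInl 2 (by omega) (by omega)
    rw [hPf, show (1 + 1 : ℕ) = 2 from rfl, proj_val hy]
    have h3 := (hcol 1 one_pos (by omega)).1.2
    rw [hw1, show (1 + 1 : ℕ) = 2 from rfl, hy] at h3
    exact h3
  · intro i h1 h2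
    rw [hPlen] at h2
    obtain ⟨x0, hx0⟩ := hInl i (by omega) (by omega)
    obtain ⟨x1, hx1⟩ := hInl (i + 1) (by omega) (by omega)
    obtain ⟨x2, hx2⟩ := hInl (i + 2) (by omega) (by omega)
    have hcoli := hcol (i + 1) (by omega) (by omega)
    refine ⟨⟨?_, ?_⟩, ?_⟩
    · rw [hPf, hPf, proj_val hx1, show i - 1 + 1 = i from by omega, proj_val hx0]
      have h3 := hcoli.1.1
      rw [hx1, show i + 1 - 1 = i from by omega, hx0] at h3
      exact h3
    · rw [hPf, hPf, proj_val hx1, show i + 1 + 1 = i + 2 from rfl, proj_val hx2]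
      have h3 := hcoli.1.2
      rw [hx1, show i + 1 + 1 = i + 2 from rfl, hx2] at h3
      exact h3
    · rw [hPf, proj_val hx1]
      exact hancconv (i + 1) (by omega) (by omega) x1 hx1

/-- Extract an inducing path of `AG` from one of the soft manipulation between
two original nodes. -/
lemma gd_path_extract_inl {a b : N}
    {w : GWalk (admgSoftManip AG DS)} (hP : w.IsPath)
    (hf : w.f 0 = Sum.inl a) (hl : w.f w.len = Sum.inl b) {S : Set N}
    (hw : (admgSoftManip AG DS).InducingWalk ∅ (Sum.inl '' S) w) :
    AG.InducingPathBtw ∅ S a b := by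
  have hcol := inducing_colliders hw
  have hInl : ∀ i, i ≤ w.len → ∃ x, w.f i = Sum.inl x := by
    intro i hi
    rcases Nat.eq_zero_or_pos i with rfl | h1
    · exact ⟨a, hf⟩
    rcases eq_or_lt_of_le hi with he | hlt
    · exact ⟨b, by rw [he, hl]⟩
    · have hc := (hcol i h1 hlt).1
      cases hx : w.f i with
      | inl x => exact ⟨x, rfl⟩
      | inr x =>
        exfalso
        have h3 := hc.1
        rw [hx] at h3
        exact gd_no_arrow_at_inr AG DS x _ h3
  have hadjP : ∀ i, i < w.len →
      AG.adj (Sum.elim id id (w.f i)) (Sum.elim id id (w.f (i + 1))) := by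
    intro i hi
    obtain ⟨x, hx⟩ := hInl i (by omega)
    obtain ⟨y, hy⟩ := hInl (i + 1) (by omega)
    rw [proj_val hx, proj_val hy]
    have := w.hadj i hi
    rw [hx, hy] at this
    exact this
  set P : GWalk AG := ⟨w.len, fun k => Sum.elim id id (w.f k), hadjP⟩ with hPdef
  have hPlen : P.len = w.len := rfl
  have hPf : ∀ k, P.f k = Sum.elim id id (w.f k) := fun _ => rfl
  refine ⟨P, ?_, ?_, ?_, ?_⟩
  · intro i hi j hj heq
    rw [hPlen] at hi hj
    obtain ⟨x, hx⟩ := hInl i hi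
    obtain ⟨y, hy⟩ := hInl j hj
    rw [hPf, hPf, proj_val hx, proj_val hy] at heq
    exact hP i hi j hj (by rw [hx, hy, heq])
  · rw [first_def, hPf, proj_val hf]
  · rw [last_def, hPlen, hPf, proj_val hl]
  · apply mk_inducing
    intro i h1 h2
    rw [hPlen] at h2
    obtain ⟨x0, hx0⟩ := hInl (i - 1) (by omega)
    obtain ⟨x1, hx1⟩ := hInl i (by omega)
    obtain ⟨x2, hx2⟩ := hInl (i + 1) (by omega)
    have hcoli := hcol i h1 h2
    refine ⟨⟨?_, ?_⟩, ?_⟩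
    · rw [hPf, hPf, proj_val hx1, proj_val hx0]
      have h3 := hcoli.1.1
      rw [hx1, hx0] at h3
      exact h3
    · rw [hPf, hPf, proj_val hx1, proj_val hx2]
      have h3 := hcoli.1.2
      rw [hx1, hx2] at h3
      exact h3
    · rw [hPf, proj_val hx1, first_def, last_def, hPf, hPf, hPlen,
        proj_val hf, proj_val hl]
      have h3 := hcoli.2
      rw [first_def, last_def, hf, hl, hx1] at h3
      exact gd_ancSet_pair2.mp h3


lemma anc_of_ancSet_empty {G : MixedGraph N} {x b : N}
    (h : x ∈ G.ancSet ({b} ∪ (∅ : Set N))) : G.anc x b := by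
  obtain ⟨t, ht, h2⟩ := h
  rcases ht with ht | ht
  · rw [Set.mem_singleton_iff] at ht
    exact ht ▸ h2
  · exact absurd ht (Set.notMem_empty t)

lemma mem_ancSet_union_left {G : MixedGraph N} {x b : N} {S : Set N} (h : G.anc x b) :
    x ∈ G.ancSet ({b} ∪ S) := ⟨b, Or.inl rfl, h⟩

lemma mag_adj_of_walk {M : MixedGraph N} (hM : M.IsIMAG) {p q : N} (hne : p ≠ q)
    (hp : p ∈ M.nodes) (hq : q ∈ M.nodes) (h : M.InducingWalkBtw ∅ ∅ p q) : M.adj p q := by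
  by_contra hc
  exact hM.1.2.2.2.2.2.2 p q hne hp hq hc (inducing_walk_to_path h)

lemma suffixW_isPath {G : MixedGraph N} {w : GWalk G} (h : w.IsPath) (j : ℕ)
    (hj : j ≤ w.len) : (suffixW w j).IsPath := by
  intro i hi k hk heq
  rw [suffixW_len] at hi hk
  rw [suffixW_f, suffixW_f] at heq
  have := h (j + i) (by omega) (j + k) (by omega) heq
  omega

/-- Key M-level lemma: propagation of edges to soft targets along collider walks. -/
lemma keyM {M : MixedGraph N} (hM : M.IsIMAG) {d b : N} (hbd : b ≠ d)
    (hdnode : d ∈ M.nodes) (hdin : d ∉ M.inputs) (hbnode : b ∈ M.nodes)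
    (hbin : b ∉ M.inputs)
    (Q : GWalk M) (hQlen : 0 < Q.len) (hQl : Q.f Q.len = b)
    (hQcol : ∀ i, 0 < i → i < Q.len →
      Q.ColliderAt i ∧ Q.f i ∈ M.ancSet ({b} ∪ (∅ : Set N)))
    (hQanc : Q.f 0 ∈ M.ancSet ({b} ∪ (∅ : Set N)))
    (hQarr : M.mark (Q.f 0) (Q.f 1) = some Mark.arrow)
    (hcase : Q.f 0 = d ∨ (M.dir d (Q.f 0) ∧ ¬ M.VisibleCond d (Q.f 0))) :
    M.undir d b ∨ (M.dir d b ∧ ¬ M.VisibleCond d b) := by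
  have hwfM := hM.1.1
  -- `d` is an ancestor of `b`
  have hdanc : M.anc d b := by
    rcases hcase with hc | hc
    · rw [← hc]
      exact anc_of_ancSet_empty hQanc
    · exact (Relation.ReflTransGen.single hc.1).trans (anc_of_ancSet_empty hQanc)
  -- `M.adj d b`
  have hQcol' : ∀ i, 0 < i → i < Q.len →
      Q.ColliderAt i ∧ Q.f i ∈ M.ancSet ({d, b} ∪ (∅ : Set N)) :=
    fun i h1 h2 => ⟨(hQcol i h1 h2).1, ancSet_pair_right (hQcol i h1 h2).2⟩
  have hMadj : M.adj d b := by
    rcases hcase with hc | hc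
    · apply mag_adj_of_walk hM (Ne.symm hbd) hdnode hbnode
      refine ⟨Q, by rw [first_def, hc], by rw [last_def, hQl], ?_⟩
      apply mk_inducing
      intro i h1 h2
      rw [first_def, last_def, hc, hQl]
      exact hQcol' i h1 h2
    · -- prepend the edge `d → (Q.f 0)`
      have hadjdv : M.adj d (Q.f 0) := adj_of_mark hc.1.1
      have hlast : (edgeW hadjdv).last = Q.first := by
        rw [last_def, first_def]
        rfl
      have hcolW := appendW_colliders hlast ({d, b} ∪ (∅ : Set N))
        (fun i h1 h2 => by rw [edgeW_len] at h2; omega)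
        hQcol'
        (fun _ _ => ⟨hc.1.2, hQarr, ancSet_pair_right hQanc⟩)
      apply mag_adj_of_walk hM (Ne.symm hbd) hdnode hbnode
      refine ⟨appendW (edgeW hadjdv) Q hlast,
        by rw [appendW_first, first_def, edgeW_f0],
        by rw [appendW_last, last_def, hQl], ?_⟩
      apply mk_inducing
      intro i h1 h2
      rw [appendW_first, appendW_last, first_def, last_def, edgeW_f0, hQl]
      exact hcolW i h1 h2
  have hmark : M.mark d b = some Mark.tail := mag_tail_of_anc hM hMadj hdanc
  rcases mark_cases hM.2 (adj_symm hwfM hMadj) with h | h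
  · exact Or.inl ⟨hmark, h⟩
  refine Or.inr ⟨⟨hmark, h⟩, ?_⟩
  intro hvis
  -- `finish`: a collider walk from `c` to `b` whose colliders are ancestors of `b`
  have finish : ∀ c : N, c ≠ b → ¬ M.adj c b → c ∈ M.nodes →
      ∀ W : GWalk M, W.f 0 = c → W.f W.len = b →
      (∀ i, 0 < i → i < W.len →
        W.ColliderAt i ∧ W.f i ∈ M.ancSet ({c, b} ∪ (∅ : Set N))) → False := by
    intro c hcb hcnadj hcnode W hW0 hWl hWcol
    apply hcnadj
    apply mag_adj_of_walk hM hcb hcnode hbnode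
    refine ⟨W, by rw [first_def, hW0], by rw [last_def, hWl], ?_⟩
    apply mk_inducing
    intro i h1 h2
    rw [first_def, last_def, hW0, hWl]
    exact hWcol i h1 h2
  rcases hvis with hin | ⟨c, hcb, hcnadj, hor⟩
  · exact hdin hin
  -- a reusable step: a node `c'` with `c' *← (Q.f 0)` (arrow at `(Q.f 0) = Q.f 0`) that is not
  -- adjacent to `b` yields a contradiction via the walk `c' − (Q.f 0) − ⋯ − b`.
  have walkFinish : ∀ c' : N, c' ≠ b → ¬ M.adj c' b → ∀ hadj : M.adj c' (Q.f 0),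
      M.mark (Q.f 0) c' = some Mark.arrow → False := by
    intro c' h1 h2 hadj harrw
    have hcnode : c' ∈ M.nodes := (hwfM.2.2.2.2.2 c' (Q.f 0) hadj).1
    have hlast : (edgeW hadj).last = Q.first := by
      rw [last_def, first_def]
      show (if (1 : ℕ) = 0 then c' else Q.f 0) = Q.f 0
      rw [if_neg one_ne_zero]
    have hcols := appendW_colliders hlast ({c', b} ∪ (∅ : Set N))
      (fun i hh1 hh2 => by rw [edgeW_len] at hh2; omega)
      (fun i hh1 hh2 => ⟨(hQcol i hh1 hh2).1, ancSet_pair_right (hQcol i hh1 hh2).2⟩)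
      (fun _ _ => ⟨harrw, hQarr, ancSet_pair_right hQanc⟩)
    refine finish c' h1 h2 hcnode (appendW (edgeW hadj) Q hlast) ?_ ?_ hcols
    · rw [appendW_f_le hlast (Nat.zero_le _)]
      rfl
    · show (appendW (edgeW hadj) Q hlast).f (1 + Q.len) = b
      rw [appendW_f_ge hlast (by rw [edgeW_len]; omega)]
      rw [edgeW_len, show 1 + Q.len - 1 = Q.len from by omega]
      exact hQl
  rcases hor with harr | ⟨ω, hωP, hωlen2, hωfirst, hωlast, hωm1, hωbid, hωdir⟩
  · -- witness `c *→ d`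
    rcases hcase with hc0 | ⟨hdv, hinvis⟩
    · -- `(Q.f 0) = d`
      refine walkFinish c hcb hcnadj ?_ ?_
      · rw [hc0]
        exact adj_symm hwfM (adj_of_mark harr)
      · rw [hc0]
        exact harr
    · by_cases hadjcv : M.adj c (Q.f 0)
      · rcases mark_cases hM.2 (adj_symm hwfM hadjcv) with htail | harrow
        · rcases mark_cases hM.2 hadjcv with ht2 | ha2
          · exact hM.1.2.2.2.2.2.1 d (Q.f 0) c hdv.2 ⟨htail, ht2⟩
          · have hanc : M.anc d c :=
              (Relation.ReflTransGen.single hdv).tail ⟨htail, ha2⟩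
            have hx := mag_tail_of_anc hM (adj_of_mark harr) hanc
            rw [harr] at hx
            cases hx
        · exact walkFinish c hcb hcnadj hadjcv harrow
      · apply hinvis
        refine Or.inr ⟨c, ?_, hadjcv, Or.inl harr⟩
        intro he
        have hx := hdv.1
        rw [← he] at hx
        rw [hx] at harr
        cases harr
  · -- witness collider chain into `d`
    have hω0 : ω.f 0 = c := by rw [← hωfirst]; rfl
    have hωl : ω.f ω.len = d := by rw [← hωlast]; rfl
    have hω1 : 0 < ω.len := by omega
    have hcnode : c ∈ M.nodes := by
      have hx := (hwfM.2.2.2.2.2 _ _ (ω.hadj 0 hω1)).1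
      rw [hω0] at hx
      exact hx
    -- arrowhead at `ω.f j` towards its predecessor, for `1 ≤ j ≤ ω.len`
    have harrback : ∀ j, 1 ≤ j → j ≤ ω.len →
        M.mark (ω.f j) (ω.f (j - 1)) = some Mark.arrow := by
      intro j h1 h2
      rcases eq_or_lt_of_le h1 with he | hlt
      · rw [← he]
        exact hωm1
      · have hx := (hωbid (j - 1) (by omega) (by omega)).2
        rw [show j - 1 + 1 = j from by omega] at hx
        exact hx
    -- interior nodes of the chain are colliders that are ancestors of `b`
    have hωcols : ∀ i, 0 < i → i < ω.len →
        ω.ColliderAt i ∧ ω.f i ∈ M.ancSet ({c, b} ∪ (∅ : Set N)) := by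
      intro i h1 h2
      refine ⟨⟨harrback i (by omega) (by omega), (hωbid i (by omega) h2).1⟩, ?_⟩
      exact ancSet_pair_right
        (mem_ancSet_union_left (Relation.ReflTransGen.single (hωdir i (by omega) h2)))
    rcases hcase with hc0 | ⟨hdv, hinvis⟩
    · -- `(Q.f 0) = d`: glue the chain to `Q`
      have hlast : ω.last = Q.first := by rw [last_def, first_def, hωl, hc0]
      have harrend : M.mark (Q.f 0) (ω.f (ω.len - 1)) = some Mark.arrow := by
        have hx := harrback ω.len (by omega) le_rfl
        rw [hωl] at hx
        rw [hc0]
        exact hx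
      have hcols := appendW_colliders hlast ({c, b} ∪ (∅ : Set N)) hωcols
        (fun i hh1 hh2 => ⟨(hQcol i hh1 hh2).1, ancSet_pair_right (hQcol i hh1 hh2).2⟩)
        (fun _ _ => ⟨harrend, hQarr, ancSet_pair_right hQanc⟩)
      refine finish c hcb hcnadj hcnode (appendW ω Q hlast) ?_ ?_ hcols
      · rw [appendW_f_le hlast (Nat.zero_le _), hω0]
      · show (appendW ω Q hlast).f (ω.len + Q.len) = b
        rw [appendW_f_ge hlast (by omega), show ω.len + Q.len - ω.len = Q.len from by omega]
        exact hQl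
    · -- `d → (Q.f 0)` invisible: downward induction along the chain
      have C : ∀ j, 1 ≤ j → j ≤ ω.len →
          (∀ i, j ≤ i → i < ω.len → M.dir (ω.f i) (Q.f 0)) → False := by
        intro j
        induction j using Nat.strong_induction_on with
        | _ j ih =>
          intro h1 h2 hall
          have harrp := harrback j h1 h2
          have hdirjv : M.dir (ω.f j) (Q.f 0) := by
            rcases eq_or_lt_of_le h2 with he | hlt
            · rw [he, hωl]
              exact hdv
            · exact hall j le_rfl hlt
          have hnev : ω.f (j - 1) ≠ (Q.f 0) := by
            intro he
            rw [he] at harrp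
            have hx := hdirjv.1
            rw [harrp] at hx
            cases hx
          by_cases hadjpv : M.adj (ω.f (j - 1)) (Q.f 0)
          · rcases mark_cases hM.2 (adj_symm hwfM hadjpv) with htail | harrow
            · rcases mark_cases hM.2 hadjpv with ht2 | ha2
              · exact hM.1.2.2.2.2.2.1 d (Q.f 0) (ω.f (j - 1)) hdv.2 ⟨htail, ht2⟩
              · have hanc : M.anc (ω.f j) (ω.f (j - 1)) :=
                  (Relation.ReflTransGen.single hdirjv).tail ⟨htail, ha2⟩
                have hx := mag_tail_of_anc hM (adj_of_mark harrp) hanc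
                rw [harrp] at hx
                cases hx
            · -- arrowhead at `(Q.f 0)` towards the predecessor
              by_cases hj1 : j = 1
              · -- predecessor is `c`
                subst hj1
                rw [hω0] at hadjpv harrow
                exact walkFinish c hcb hcnadj hadjpv harrow
              · rcases mark_cases hM.2 hadjpv with ht2 | ha2
                · -- `ω.f (j-1) → (Q.f 0)`: recurse
                  refine ih (j - 1) (by omega) (by omega) (by omega) ?_
                  intro i hi1 hi2
                  rcases eq_or_lt_of_le hi1 with he | hlt2
                  · rw [← he]
                    exact ⟨ht2, harrow⟩
                  · exact hall i (by omega) hi2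
                · -- `ω.f (j-1) ↔ (Q.f 0)`: build the walk `c ⋯ ω.f (j-1) − (Q.f 0) ⋯ b`
                  have hpre : j - 1 ≤ ω.len := by omega
                  have hlast1 : (prefixW ω (j - 1) hpre).last = (edgeW hadjpv).first := by
                    rw [last_def, first_def]
                    rfl
                  have hlast2 : (appendW (prefixW ω (j - 1) hpre) (edgeW hadjpv)
                      hlast1).last = Q.first := by
                    rw [appendW_last, last_def, first_def]
                    show (if (1 : ℕ) = 0 then ω.f (j - 1) else (Q.f 0)) = Q.f 0
                    rw [if_neg one_ne_zero]
                  have hcols1 := appendW_colliders hlast1 ({c, b} ∪ (∅ : Set N))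
                    (fun i hh1 hh2 => by
                      rw [prefixW_len] at hh2
                      exact hωcols i hh1 (by omega))
                    (fun i hh1 hh2 => by rw [edgeW_len] at hh2; omega)
                    (fun hl1 _ => by
                      rw [prefixW_len] at hl1
                      refine ⟨?_, ha2, ?_⟩
                      · show M.mark (ω.f (j - 1)) ((prefixW ω (j - 1) hpre).f (j - 1 - 1))
                            = some Mark.arrow
                        rw [prefixW_f]
                        exact harrback (j - 1) (by omega) (by omega)
                      · exact ancSet_pair_right (mem_ancSet_union_left
                          (Relation.ReflTransGen.single (hωdir (j - 1) (by omega) (by omega))))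
                    )
                  have hmid : (appendW (prefixW ω (j - 1) hpre) (edgeW hadjpv) hlast1).f
                      ((appendW (prefixW ω (j - 1) hpre) (edgeW hadjpv) hlast1).len - 1)
                      = ω.f (j - 1) := by
                    rw [appendW_len, prefixW_len, edgeW_len,
                      show j - 1 + 1 - 1 = j - 1 from rfl,
                      appendW_f_le hlast1 (by rw [prefixW_len]), prefixW_f]
                  have hcols2 := appendW_colliders hlast2 ({c, b} ∪ (∅ : Set N)) hcols1
                    (fun i hh1 hh2 => ⟨(hQcol i hh1 hh2).1,
                      ancSet_pair_right (hQcol i hh1 hh2).2⟩)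
                    (fun _ _ => by
                      refine ⟨?_, hQarr, ancSet_pair_right hQanc⟩
                      rw [hmid]
                      exact harrow)
                  refine finish c hcb hcnadj hcnode _ ?_ ?_ hcols2
                  · rw [appendW_f_le hlast2 (by rw [appendW_len, prefixW_len, edgeW_len]; omega),
                      appendW_f_le hlast1 (by rw [prefixW_len]; omega), prefixW_f]
                    exact hω0
                  · show _ = b
                    rw [show (appendW (appendW (prefixW ω (j-1) hpre) (edgeW hadjpv) hlast1) Q
                        hlast2).len = (j - 1 + 1) + Q.len from by
                      rw [appendW_len, appendW_len, prefixW_len, edgeW_len]]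
                    rw [appendW_f_ge hlast2 (by rw [appendW_len, prefixW_len, edgeW_len]; omega)]
                    rw [appendW_len, prefixW_len, edgeW_len,
                      show j - 1 + 1 + Q.len - (j - 1 + 1) = Q.len from by omega]
                    exact hQl
          · -- not adjacent: visibility witness for `d → (Q.f 0)`
            apply hinvis
            rcases eq_or_lt_of_le h2 with he | hlt
            · subst he
              rw [hωl] at harrp
              exact Or.inr ⟨ω.f (ω.len - 1), hnev, hadjpv, Or.inl harrp⟩
            · refine Or.inr ⟨ω.f (j - 1), hnev, hadjpv,
                Or.inr ⟨suffixW ω (j - 1), suffixW_isPath hωP (j - 1) (by omega),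
                  ?_, ?_, ?_, ?_, ?_, ?_⟩⟩
              · rw [suffixW_len]
                omega
              · rw [first_def, suffixW_f, Nat.add_zero]
              · rw [last_def, suffixW_len, suffixW_f,
                  show j - 1 + (ω.len - (j - 1)) = ω.len from by omega, hωl]
              · rw [suffixW_f, suffixW_f, Nat.add_zero,
                  show j - 1 + 1 = j from by omega]
                exact harrp
              · intro i hi1 hi2
                rw [suffixW_len] at hi2
                have hx := hωbid (j - 1 + i) (by omega) (by omega)
                rw [suffixW_f, suffixW_f, show j - 1 + (i + 1) = j - 1 + i + 1 from by omega]
                exact hx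
              · intro i hi1 hi2
                rw [suffixW_len] at hi2
                rw [suffixW_f]
                exact hall (j - 1 + i) (by omega) (by omega)
      exact C ω.len (by omega) le_rfl (fun i hi1 hi2 => absurd hi1 (by omega))


/-! ### The candidate iMAG `Mt` -/

/-- The soft-manipulated iMAG with circles resolved according to `MA`. -/
def MtG (M : MixedGraph N) (D : Set N) (MA : MixedGraph (N ⊕ N)) : MixedGraph (N ⊕ N) where
  inputs := (magSoftManip M D).inputs
  outputs := (magSoftManip M D).outputs
  mark := fun x y =>
    if (magSoftManip M D).mark x y = some Mark.circle then
      (if MA.mark x y = some Mark.tail then some Mark.tail else some Mark.arrow)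
    else (magSoftManip M D).mark x y

variable {M : MixedGraph N} {D : Set N} {MA : MixedGraph (N ⊕ N)}

lemma mtg_inputs : (MtG M D MA).inputs = (magSoftManip M D).inputs := rfl
lemma mtg_outputs : (MtG M D MA).outputs = (magSoftManip M D).outputs := rfl

lemma mtg_eq_of_ne_circle {x y : N ⊕ N}
    (h : (magSoftManip M D).mark x y ≠ some Mark.circle) :
    (MtG M D MA).mark x y = (magSoftManip M D).mark x y := if_neg h

lemma mtg_eq_of_circle {x y : N ⊕ N}
    (h : (magSoftManip M D).mark x y = some Mark.circle) :
    (MtG M D MA).mark x y =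
      (if MA.mark x y = some Mark.tail then some Mark.tail else some Mark.arrow) := if_pos h

lemma mtg_inl_inl (hM : M.IsIMAG) (u w : N) :
    (MtG M D MA).mark (Sum.inl u) (Sum.inl w) = M.mark u w := by
  rw [mtg_eq_of_ne_circle (by rw [gg_inl_inl]; exact hM.2 u w), gg_inl_inl]

lemma gg_inr_ne_circle (a : N) (y : N ⊕ N) :
    (magSoftManip M D).mark (Sum.inr a) y ≠ some Mark.circle := by
  cases y with
  | inl v =>
    by_cases ha : a ∈ D ∧ a ∉ M.inputs
    · rw [gg_inr_inl ha]
      split_ifs <;> simp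
    · rw [gg_inr_inl_not ha]
      simp
  | inr v =>
    rw [gg_inr_inr]
    simp

lemma mtg_inr (a : N) (y : N ⊕ N) :
    (MtG M D MA).mark (Sum.inr a) y = (magSoftManip M D).mark (Sum.inr a) y :=
  mtg_eq_of_ne_circle (gg_inr_ne_circle a y)

lemma mtg_isSome_iff (x y : N ⊕ N) :
    ((MtG M D MA).mark x y).isSome ↔ ((magSoftManip M D).mark x y).isSome := by
  by_cases h : (magSoftManip M D).mark x y = some Mark.circle
  · rw [mtg_eq_of_circle h, h]
    split_ifs <;> simp
  · rw [mtg_eq_of_ne_circle h]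

lemma mtg_adj_iff (x y : N ⊕ N) :
    (MtG M D MA).adj x y ↔ (magSoftManip M D).adj x y := by
  rw [MixedGraph.adj, MixedGraph.adj]
  exact ⟨fun h => (mtg_isSome_iff x y).mp h, fun h => (mtg_isSome_iff x y).mpr h⟩

lemma mtg_arrow_of {x y : N ⊕ N} (h : (magSoftManip M D).mark x y = some Mark.arrow) :
    (MtG M D MA).mark x y = some Mark.arrow := by
  rw [mtg_eq_of_ne_circle (by rw [h]; simp), h]

lemma mtg_tail_of {x y : N ⊕ N} (h : (magSoftManip M D).mark x y = some Mark.tail) :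
    (MtG M D MA).mark x y = some Mark.tail := by
  rw [mtg_eq_of_ne_circle (by rw [h]; simp), h]

lemma target_ne_ne_circle {a v : N} (hv : v ≠ a) :
    magSoftTarget (M.sumInl : MixedGraph (N ⊕ N)) a (Sum.inl v) ≠ some Mark.circle := by
  unfold magSoftTarget
  rw [if_neg (by simp [hv] : (Sum.inl v : N ⊕ N) ≠ Sum.inl a)]
  split_ifs <;> simp

lemma mtg_inl_inr_ne {a v : N} (ha : a ∈ D ∧ a ∉ M.inputs) (hv : v ≠ a) :
    (MtG M D MA).mark (Sum.inl v) (Sum.inr a) =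
      magSoftTarget (M.sumInl : MixedGraph (N ⊕ N)) a (Sum.inl v) := by
  rw [mtg_eq_of_ne_circle (by rw [gg_inl_inr ha]; exact target_ne_ne_circle hv),
    gg_inl_inr ha]

lemma mtg_inl_inr_not {a v : N} (ha : ¬ (a ∈ D ∧ a ∉ M.inputs)) :
    (MtG M D MA).mark (Sum.inl v) (Sum.inr a) = none := by
  rw [mtg_eq_of_ne_circle (by rw [gg_inl_inr_not ha]; simp), gg_inl_inr_not ha]

lemma mtg_self_arrowAt {a : N} (ha : a ∈ D ∧ a ∉ M.inputs)
    (h : ∃ c, M.mark a c = some Mark.arrow) :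
    (MtG M D MA).mark (Sum.inl a) (Sum.inr a) = some Mark.arrow := by
  rw [mtg_eq_of_ne_circle (by rw [gg_inl_inr ha, target_self_arrow h]; simp),
    gg_inl_inr ha, target_self_arrow h]

lemma mtg_self_undir {a : N} (ha : a ∈ D ∧ a ∉ M.inputs)
    (h1 : ¬ ∃ c, M.mark a c = some Mark.arrow) (h2 : ∃ c, M.undir a c) :
    (MtG M D MA).mark (Sum.inl a) (Sum.inr a) = some Mark.tail := by
  rw [mtg_eq_of_ne_circle (by rw [gg_inl_inr ha, target_self_tail h1 h2]; simp),
    gg_inl_inr ha, target_self_tail h1 h2]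

lemma mtg_self_circle {a : N} (ha : a ∈ D ∧ a ∉ M.inputs)
    (h1 : ¬ ∃ c, M.mark a c = some Mark.arrow) (h2 : ¬ ∃ c, M.undir a c) :
    (MtG M D MA).mark (Sum.inl a) (Sum.inr a) =
      (if MA.mark (Sum.inl a) (Sum.inr a) = some Mark.tail
        then some Mark.tail else some Mark.arrow) := by
  rw [mtg_eq_of_circle (by rw [gg_inl_inr ha, target_self_circle h1 h2])]

lemma mtg_inr_inl {a : N} (ha : a ∈ D ∧ a ∉ M.inputs) (v : N) :
    (MtG M D MA).mark (Sum.inr a) (Sum.inl v) =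
      if (magSoftTarget (M.sumInl : MixedGraph (N ⊕ N)) a (Sum.inl v)).isSome
      then some Mark.tail else none := by
  rw [mtg_inr, gg_inr_inl ha]

lemma mtg_inr_inl_not {a : N} (ha : ¬ (a ∈ D ∧ a ∉ M.inputs)) (v : N) :
    (MtG M D MA).mark (Sum.inr a) (Sum.inl v) = none := by
  rw [mtg_inr, gg_inr_inl_not ha]

lemma mtg_inr_inr (a c : N) : (MtG M D MA).mark (Sum.inr a) (Sum.inr c) = none := by
  rw [mtg_inr, gg_inr_inr]

lemma mtg_no_arrow_at_inr (a : N) (y : N ⊕ N) :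
    (MtG M D MA).mark (Sum.inr a) y ≠ some Mark.arrow := by
  cases y with
  | inl v =>
    by_cases ha : a ∈ D ∧ a ∉ M.inputs
    · rw [mtg_inr_inl ha]
      split_ifs <;> simp
    · rw [mtg_inr_inl_not ha]
      simp
  | inr v =>
    rw [mtg_inr_inr]
    simp

/-- The possible marks on `Mt`'s edge from `inl v` to `inr a` (`v ≠ a`). -/
lemma mtg_inl_inr_ne_cases {a v : N} (ha : a ∈ D ∧ a ∉ M.inputs) (hv : v ≠ a) {m : Mark}
    (h : (MtG M D MA).mark (Sum.inl v) (Sum.inr a) = some m) :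
    v ∈ M.outputs ∧
      ((m = Mark.arrow ∧ M.dir a v ∧ ¬ M.VisibleCond a v) ∨
        (m = Mark.tail ∧ M.undir a v)) := by
  rw [mtg_inl_inr_ne ha hv] at h
  cases m with
  | arrow =>
    obtain ⟨h1, h2, h3⟩ := (target_ne_arrow_iff hv).mp h
    exact ⟨h1, Or.inl ⟨rfl, h2, h3⟩⟩
  | tail =>
    obtain ⟨h1, h2⟩ := (target_ne_tail_iff hv).mp h
    exact ⟨h1, Or.inr ⟨rfl, h2⟩⟩
  | circle => exact absurd h (target_ne_ne_circle hv)

lemma mtg_no_circle (hM : M.IsIMAG) (x y : N ⊕ N) :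
    (MtG M D MA).mark x y ≠ some Mark.circle := by
  by_cases h : (magSoftManip M D).mark x y = some Mark.circle
  · rw [mtg_eq_of_circle h]
    split_ifs <;> simp
  · rw [mtg_eq_of_ne_circle h]
    cases x with
    | inl u =>
      cases y with
      | inl w =>
        rw [gg_inl_inl]
        exact hM.2 u w
      | inr a =>
        by_cases ha : a ∈ D ∧ a ∉ M.inputs
        · rw [gg_inl_inr ha] at h ⊢
          exact h
        · rw [gg_inl_inr_not ha]
          simp
    | inr a => exact gg_inr_ne_circle a y

/-- Arrow marks in `Mt` occur only at `inl` nodes, and come from `M`-arrowheads or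
a resolved self-circle. -/
lemma mtg_arrow_cases (hM : M.IsIMAG) {x y : N ⊕ N}
    (h : (MtG M D MA).mark x y = some Mark.arrow) :
    ∃ v, x = Sum.inl v ∧
      ((∃ c, M.mark v c = some Mark.arrow) ∨
        (y = Sum.inr v ∧ ¬ ∃ c, M.undir v c)) := by
  cases x with
  | inl v =>
    refine ⟨v, rfl, ?_⟩
    cases y with
    | inl w =>
      rw [mtg_inl_inl hM] at h
      exact Or.inl ⟨w, h⟩
    | inr a =>
      by_cases ha : a ∈ D ∧ a ∉ M.inputs
      · by_cases hv : v = a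
        · subst hv
          by_cases h1 : ∃ c, M.mark v c = some Mark.arrow
          · exact Or.inl h1
          · by_cases h2 : ∃ c, M.undir v c
            · rw [mtg_self_undir ha h1 h2] at h
              cases h
            · exact Or.inr ⟨rfl, h2⟩
        · obtain ⟨_, hcase⟩ := mtg_inl_inr_ne_cases ha hv h
          rcases hcase with ⟨_, hdir, _⟩ | ⟨hne, _⟩
          · exact Or.inl ⟨a, hdir.2⟩
          · cases hne
      · rw [mtg_inl_inr_not ha] at h
        cases h
  | inr a => exact absurd h (mtg_no_arrow_at_inr a y)

/-- Tail marks at `inl v` towards `inr` targets. -/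
lemma mtg_undir_cases (hM : M.IsIMAG) {x c : N ⊕ N}
    (h : (MtG M D MA).undir x c) :
    (∃ v w, x = Sum.inl v ∧ c = Sum.inl w ∧ M.undir v w) ∨
    (∃ v, x = Sum.inl v ∧ c = Sum.inr v ∧ ¬ ∃ e, M.mark v e = some Mark.arrow) ∨
    (∃ v w, x = Sum.inl v ∧ c = Sum.inr w ∧ v ≠ w ∧ M.undir w v) ∨
    (∃ v, x = Sum.inr v ∧ ¬ ∃ e, M.mark v e = some Mark.arrow) ∨
    (∃ v w, x = Sum.inr v ∧ c = Sum.inl w ∧ v ≠ w ∧ M.undir v w) := by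
  obtain ⟨h1, h2⟩ := h
  cases x with
  | inl v =>
    cases c with
    | inl w =>
      rw [mtg_inl_inl hM] at h1 h2
      exact Or.inl ⟨v, w, rfl, rfl, h1, h2⟩
    | inr a =>
      by_cases ha : a ∈ D ∧ a ∉ M.inputs
      · by_cases hv : v = a
        · subst hv
          refine Or.inr (Or.inl ⟨v, rfl, rfl, ?_⟩)
          intro harrAt
          rw [mtg_self_arrowAt ha harrAt] at h1
          cases h1
        · obtain ⟨_, hcase⟩ := mtg_inl_inr_ne_cases ha hv h1
          rcases hcase with ⟨hne, _⟩ | ⟨_, hundir⟩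
          · cases hne
          · exact Or.inr (Or.inr (Or.inl ⟨v, a, rfl, rfl, hv, hundir⟩))
      · rw [mtg_inl_inr_not ha] at h1
        cases h1
  | inr a =>
    cases c with
    | inl w =>
      by_cases ha : a ∈ D ∧ a ∉ M.inputs
      · by_cases hv : w = a
        · subst hv
          refine Or.inr (Or.inr (Or.inr (Or.inl ⟨w, rfl, ?_⟩)))
          intro harrAt
          rw [mtg_self_arrowAt ha harrAt] at h2
          cases h2
        · obtain ⟨_, hcase⟩ := mtg_inl_inr_ne_cases ha hv h2
          rcases hcase with ⟨hne, _⟩ | ⟨_, hundir⟩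
          · cases hne
          · exact Or.inr (Or.inr (Or.inr (Or.inr ⟨a, w, rfl, rfl,
              fun he => hv (he.symm), hundir⟩)))
      · rw [mtg_inr_inl_not ha] at h1
        cases h1
    | inr c' =>
      rw [mtg_inr_inr] at h1
      cases h1


lemma mtg_dir_cases (hM : M.IsIMAG) {x y : N ⊕ N} (h : (MtG M D MA).dir x y) :
    (∃ u w, x = Sum.inl u ∧ y = Sum.inl w ∧ M.dir u w) ∨
      (∃ a v, x = Sum.inr a ∧ y = Sum.inl v ∧ a ∈ D ∧ a ∉ M.inputs) := by
  obtain ⟨h1, h2⟩ := h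
  cases y with
  | inl w =>
    cases x with
    | inl u =>
      rw [mtg_inl_inl hM] at h1 h2
      exact Or.inl ⟨u, w, rfl, rfl, h1, h2⟩
    | inr a =>
      by_cases ha : a ∈ D ∧ a ∉ M.inputs
      · exact Or.inr ⟨a, w, rfl, rfl, ha⟩
      · rw [mtg_inr_inl_not ha] at h1
        cases h1
  | inr a => exact absurd h2 (mtg_no_arrow_at_inr a x)

lemma mtg_anc_inl (hM : M.IsIMAG) {u : N} {t : N ⊕ N}
    (h : (MtG M D MA).anc (Sum.inl u) t) : ∃ w, t = Sum.inl w ∧ M.anc u w := by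
  induction h with
  | refl => exact ⟨u, rfl, Relation.ReflTransGen.refl⟩
  | tail h1 h2 ih =>
    obtain ⟨v, rfl, hv⟩ := ih
    rcases mtg_dir_cases hM h2 with ⟨u', w, hu, hw, hd⟩ | ⟨a, w, hx, _⟩
    · cases hu
      exact ⟨w, hw, hv.tail hd⟩
    · cases hx

lemma mtg_anc_to_inr (hM : M.IsIMAG) {a : N} {t : N ⊕ N}
    (h : (MtG M D MA).anc t (Sum.inr a)) : t = Sum.inr a := by
  have : ∀ s, (MtG M D MA).anc t s → s = Sum.inr a → t = Sum.inr a := by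
    intro s hs
    induction hs with
    | refl => exact fun h => h
    | tail h1 h2 ih =>
      intro he
      subst he
      exact absurd h2.2 (mtg_no_arrow_at_inr a _)
  exact this _ h rfl

lemma mag_anc_to_input (hM : M.IsIMAG) {z i : N} (h : M.anc z i) (hi : i ∈ M.inputs) :
    z = i := by
  have : ∀ s, M.anc z s → s = i → z = i := by
    intro s hs
    induction hs with
    | refl => exact fun h => h
    | tail h1 h2 ih =>
      intro he
      rw [he] at h2
      exact absurd h2.2 (hM.1.2.1 i hi _)
  exact this _ h rfl

lemma mtg_anc_lift (hM : M.IsIMAG) {u w : N} (h : M.anc u w) :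
    (MtG M D MA).anc (Sum.inl u) (Sum.inl w) := by
  induction h with
  | refl => exact Relation.ReflTransGen.refl
  | tail h1 h2 ih =>
    refine ih.tail ⟨?_, ?_⟩
    · rw [mtg_inl_inl hM]
      exact h2.1
    · rw [mtg_inl_inl hM]
      exact h2.2

lemma mem_mtg_nodes_inl (hM : M.IsIMAG) {u : N} (h : u ∈ M.nodes) :
    Sum.inl u ∈ (MtG M D MA).nodes := by
  rcases h with h | h
  · exact Or.inl (by rw [mtg_inputs, gg_inputs]; exact Or.inl ⟨u, h, rfl⟩)
  · exact Or.inr ⟨u, h, rfl⟩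

lemma mtg_nodes_inl (hM : M.IsIMAG) {u : N}
    (h : Sum.inl u ∈ (MtG M D MA).nodes) : u ∈ M.nodes := by
  rcases h with h | h
  · rw [mtg_inputs, gg_inputs] at h
    rcases h with h | h
    · obtain ⟨w, hw, he⟩ := h
      exact Or.inl ((Sum.inl.inj he) ▸ hw)
    · obtain ⟨w, _, he⟩ := h
      cases he
  · obtain ⟨w, hw, he⟩ := h
    exact Or.inr ((Sum.inl.inj he) ▸ hw)

lemma mtg_nodes_inr {a : N} (h : Sum.inr a ∈ (MtG M D MA).nodes) :
    a ∈ D ∧ a ∉ M.inputs := by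
  rcases h with h | h
  · rw [mtg_inputs, gg_inputs] at h
    rcases h with h | h
    · obtain ⟨w, _, he⟩ := h
      cases he
    · obtain ⟨w, hw, he⟩ := h
      exact (Sum.inr.inj he) ▸ hw
  · obtain ⟨w, _, he⟩ := h
    cases he

lemma mem_mtg_inputs_inr {a : N} (h : a ∈ D ∧ a ∉ M.inputs) :
    Sum.inr a ∈ (MtG M D MA).inputs := by
  rw [mtg_inputs, gg_inputs]
  exact Or.inr ⟨a, h, rfl⟩

lemma mtg_WF (hM : M.IsIMAG) (hD : D ⊆ M.nodes) : (MtG M D MA).WF := by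
  have hwfM := hM.1.1
  refine ⟨?_, ?_, ?_, ?_, ?_, ?_⟩
  · rw [Set.disjoint_left]
    rintro x hx hy
    rw [mtg_inputs, gg_inputs] at hx
    rw [mtg_outputs, gg_outputs] at hy
    obtain ⟨w, hw, he⟩ := hy
    rcases hx with hx | hx
    · obtain ⟨u, hu, he2⟩ := hx
      rw [← he] at he2
      have : u = w := Sum.inl.inj he2
      subst this
      exact Set.disjoint_left.mp hwfM.1 hu hw
    · obtain ⟨u, _, he2⟩ := hx
      rw [← he] at he2
      cases he2
  · rw [mtg_inputs, gg_inputs]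
    refine Set.Finite.union (hwfM.2.1.image _) ?_
    refine Set.Finite.image _ (Set.Finite.subset (Set.Finite.union hwfM.2.1 hwfM.2.2.1) ?_)
    intro a ha
    exact hD ha.1
  · rw [mtg_outputs, gg_outputs]
    exact hwfM.2.2.1.image _
  · intro x y h
    rw [mtg_isSome_iff] at h
    rw [mtg_isSome_iff]
    cases x with
    | inl u =>
      cases y with
      | inl w =>
        rw [gg_inl_inl] at h
        rw [gg_inl_inl]
        exact hwfM.2.2.2.1 u w h
      | inr a =>
        by_cases ha : a ∈ D ∧ a ∉ M.inputs
        · rw [gg_inl_inr ha] at h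
          rw [gg_inr_inl ha, if_pos h]
          rfl
        · rw [gg_inl_inr_not ha] at h
          simp at h
    | inr a =>
      cases y with
      | inl w =>
        by_cases ha : a ∈ D ∧ a ∉ M.inputs
        · rw [gg_inr_inl ha] at h
          rw [gg_inl_inr ha]
          by_cases ht : (magSoftTarget (M.sumInl : MixedGraph (N ⊕ N)) a (Sum.inl w)).isSome
          · exact ht
          · rw [if_neg ht] at h
            simp at h
        · rw [gg_inr_inl_not ha] at h
          simp at h
      | inr c =>
        rw [gg_inr_inr] at h
        simp at h
  · intro x
    cases x with
    | inl u =>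
      rw [mtg_inl_inl hM]
      exact hwfM.2.2.2.2.1 u
    | inr a => exact mtg_inr_inr a a
  · intro x y h
    rw [mtg_isSome_iff] at h
    have main : ∀ v a, ((magSoftManip M D).mark (Sum.inl v) (Sum.inr a)).isSome →
        Sum.inl v ∈ (MtG M D MA).nodes ∧ Sum.inr a ∈ (MtG M D MA).nodes := by
      intro v a hsome
      by_cases ha : a ∈ D ∧ a ∉ M.inputs
      · rw [gg_inl_inr ha] at hsome
        refine ⟨?_, Or.inl (mem_mtg_inputs_inr ha)⟩
        by_cases hv : v = a
        · subst hv
          exact mem_mtg_nodes_inl hM (hD ha.1)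
        · exact mem_mtg_nodes_inl hM (Or.inr ((target_ne_isSome_iff hv).mp hsome).1)
      · rw [gg_inl_inr_not ha] at hsome
        simp at hsome
    cases x with
    | inl u =>
      cases y with
      | inl w =>
        rw [gg_inl_inl] at h
        have := hwfM.2.2.2.2.2 u w h
        exact ⟨mem_mtg_nodes_inl hM this.1, mem_mtg_nodes_inl hM this.2⟩
      | inr a => exact main u a h
    | inr a =>
      cases y with
      | inl w =>
        by_cases ha : a ∈ D ∧ a ∉ M.inputs
        · rw [gg_inr_inl ha] at h
          by_cases ht : (magSoftTarget (M.sumInl : MixedGraph (N ⊕ N)) a (Sum.inl w)).isSome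
          · have := main w a (by rw [gg_inl_inr ha]; exact ht)
            exact ⟨this.2, this.1⟩
          · rw [if_neg ht] at h
            simp at h
        · rw [gg_inr_inl_not ha] at h
          simp at h
      | inr c =>
        rw [gg_inr_inr] at h
        simp at h


lemma reverseW_isPath {G : MixedGraph N} (hwf : G.WF) {w : GWalk G} (h : w.IsPath) :
    (reverseW hwf w).IsPath := by
  intro i hi j hj heq
  rw [reverseW_len] at hi hj
  rw [reverseW_f, reverseW_f] at heq
  have := h (w.len - i) (by omega) (w.len - j) (by omega) heq
  omega

lemma mtg_ancSet_pair_inr (hM : M.IsIMAG) {z a b' : N}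
    (h : Sum.inl z ∈ (MtG M D MA).ancSet
      (({Sum.inr a, Sum.inl b'} : Set (N ⊕ N)) ∪ (∅ : Set (N ⊕ N)))) :
    z ∈ M.ancSet ({b'} ∪ (∅ : Set N)) := by
  obtain ⟨t, ht, hanc⟩ := h
  obtain ⟨v, rfl, hv⟩ := mtg_anc_inl hM hanc
  simp only [Set.mem_union, Set.mem_insert_iff, Set.mem_singleton_iff] at ht
  rcases ht with (ht | ht) | ht
  · cases ht
  · exact ⟨b', Or.inl rfl, (Sum.inl.inj ht) ▸ hv⟩
  · exact absurd ht (Set.notMem_empty _)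

lemma mtg_ancSet_pair_inl (hM : M.IsIMAG) {z u w : N}
    (h : Sum.inl z ∈ (MtG M D MA).ancSet
      (({Sum.inl u, Sum.inl w} : Set (N ⊕ N)) ∪ (∅ : Set (N ⊕ N)))) :
    z ∈ M.ancSet ({u, w} ∪ (∅ : Set N)) := by
  obtain ⟨t, ht, hanc⟩ := h
  obtain ⟨v, rfl, hv⟩ := mtg_anc_inl hM hanc
  simp only [Set.mem_union, Set.mem_insert_iff, Set.mem_singleton_iff] at ht
  rcases ht with (ht | ht) | ht
  · exact ⟨u, Or.inl (Set.mem_insert _ _), (Sum.inl.inj ht) ▸ hv⟩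
  · exact ⟨w, Or.inl (Set.mem_insert_iff.mpr (Or.inr rfl)), (Sum.inl.inj ht) ▸ hv⟩
  · exact absurd ht (Set.notMem_empty _)

/-- Core of the maximality proof of `Mt` for walks starting at a regime node. -/
lemma mtg_inr_walk (hM : M.IsIMAG) (hD : D ⊆ M.nodes) {a b' : N}
    (ha : a ∈ D ∧ a ∉ M.inputs)
    (hnadj : ¬ (MtG M D MA).adj (Sum.inr a) (Sum.inl b'))
    (w : GWalk (MtG M D MA)) (hP : w.IsPath)
    (hf : w.f 0 = Sum.inr a) (hl : w.f w.len = Sum.inl b')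
    (hw : (MtG M D MA).InducingWalk ∅ ∅ w) (hbnode : b' ∈ M.nodes) : False := by
  have hwfM := hM.1.1
  have hcol := inducing_colliders hw
  have hlen1 : 0 < w.len := by
    by_contra hcon
    have h0 : w.len = 0 := by omega
    rw [h0, hf] at hl
    cases hl
  -- `b' = a` gives adjacency at once
  have hadjaa : ∀ hba : b' = a, False := by
    intro hba
    subst hba
    apply hnadj
    rw [MixedGraph.adj, mtg_inr_inl ha, if_pos (target_self_isSome M b')]
    rfl
  by_cases hba : b' = a
  · exact hadjaa hba
  have hlen2 : 2 ≤ w.len := by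
    by_contra hcon
    have h1 : w.len = 1 := by omega
    apply hnadj
    have := w.hadj 0 hlen1
    rw [hf, show w.f 1 = Sum.inl b' from by rw [← h1, hl]] at this
    exact this
  have hInl : ∀ i, 1 ≤ i → i ≤ w.len → ∃ x, w.f i = Sum.inl x := by
    intro i h1 h2
    rcases eq_or_lt_of_le h2 with he | hlt
    · exact ⟨b', by rw [he, hl]⟩
    · have hc := (hcol i h1 hlt).1
      cases hx : w.f i with
      | inl x => exact ⟨x, rfl⟩
      | inr x =>
        exfalso
        have h3 := hc.1
        rw [hx] at h3
        exact mtg_no_arrow_at_inr x _ h3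
  have hancconv : ∀ i, 0 < i → i < w.len → ∀ x, w.f i = Sum.inl x →
      x ∈ M.ancSet ({b'} ∪ (∅ : Set N)) := by
    intro i h1 h2 x hx
    have h3 := (hcol i h1 h2).2
    rw [first_def, last_def, hf, hl, hx] at h3
    exact mtg_ancSet_pair_inr hM h3
  -- `b'` is an output node
  obtain ⟨v1, hv1⟩ := hInl 1 le_rfl (by omega)
  have hv1anc := hancconv 1 one_pos (by omega) v1 hv1
  have hbout : b' ∈ M.outputs := by
    rcases hbnode with hin | hout
    · exfalso
      have hzb : v1 = b' := mag_anc_to_input hM (anc_of_ancSet_empty hv1anc) hin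
      have : (1 : ℕ) = w.len := hP 1 (by omega) w.len le_rfl (by rw [hv1, hl, hzb])
      omega
    · exact hout
  have hbin : b' ∉ M.inputs := fun hin => Set.disjoint_left.mp hwfM.1 hin hbout
  -- the first edge of the walk
  have hcol1 := (hcol 1 one_pos (by omega)).1
  have harr1 : (MtG M D MA).mark (Sum.inl v1) (Sum.inr a) = some Mark.arrow := by
    have h3 := hcol1.1
    rw [hv1, show (1 : ℕ) - 1 = 0 from rfl, hf] at h3
    exact h3
  have hcase : v1 = a ∨ (M.dir a v1 ∧ ¬ M.VisibleCond a v1) := by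
    by_cases hv : v1 = a
    · exact Or.inl hv
    · obtain ⟨_, hc2⟩ := mtg_inl_inr_ne_cases ha hv harr1
      rcases hc2 with ⟨_, h4, h5⟩ | ⟨h4, _⟩
      · exact Or.inr ⟨h4, h5⟩
      · cases h4
  -- the projected M-walk from `v1` to `b'`
  have hadjQ : ∀ i, i < w.len - 1 →
      M.adj (Sum.elim id id (w.f (i + 1))) (Sum.elim id id (w.f (i + 1 + 1))) := by
    intro i hi
    obtain ⟨x, hx⟩ := hInl (i + 1) (by omega) (by omega)
    obtain ⟨y, hy⟩ := hInl (i + 1 + 1) (by omega) (by omega)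
    rw [proj_val hx, proj_val hy]
    have h3 := w.hadj (i + 1) (by omega)
    rw [hx, hy, MixedGraph.adj, mtg_inl_inl hM] at h3
    exact h3
  set Q : GWalk M := ⟨w.len - 1, fun k => Sum.elim id id (w.f (k + 1)), hadjQ⟩ with hQdef
  have hQlen : Q.len = w.len - 1 := rfl
  have hQf : ∀ k, Q.f k = Sum.elim id id (w.f (k + 1)) := fun _ => rfl
  have hQ0 : Q.f 0 = v1 := by rw [hQf, proj_val hv1]
  have hdisj := keyM hM hba (hD ha.1) ha.2 hbnode hbin Q (by rw [hQlen]; omega)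
    (by rw [hQlen, hQf, show w.len - 1 + 1 = w.len from by omega, proj_val hl])
    (by
      intro i h1 h2
      rw [hQlen] at h2
      obtain ⟨x0, hx0⟩ := hInl i (by omega) (by omega)
      obtain ⟨x1, hx1⟩ := hInl (i + 1) (by omega) (by omega)
      obtain ⟨x2, hx2⟩ := hInl (i + 2) (by omega) (by omega)
      have hcoli := hcol (i + 1) (by omega) (by omega)
      refine ⟨⟨?_, ?_⟩, ?_⟩
      · rw [hQf, hQf, proj_val hx1, show i - 1 + 1 = i from by omega, proj_val hx0]
        have h3 := hcoli.1.1
        rw [hx1, show i + 1 - 1 = i from by omega, hx0, mtg_inl_inl hM] at h3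
        exact h3
      · rw [hQf, hQf, proj_val hx1, show i + 1 + 1 = i + 2 from rfl, proj_val hx2]
        have h3 := hcoli.1.2
        rw [hx1, show i + 1 + 1 = i + 2 from rfl, hx2, mtg_inl_inl hM] at h3
        exact h3
      · rw [hQf, proj_val hx1]
        exact hancconv (i + 1) (by omega) (by omega) x1 hx1)
    (by rw [hQ0]; exact hv1anc)
    (by
      obtain ⟨x2, hx2⟩ := hInl 2 (by omega) (by omega)
      rw [hQ0, hQf, show (1 + 1 : ℕ) = 2 from rfl, proj_val hx2]
      have h3 := hcol1.2
      rw [hv1, show (1 + 1 : ℕ) = 2 from rfl, hx2, mtg_inl_inl hM] at h3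
      exact h3)
    (by rw [hQ0]; exact hcase)
  -- so `Mt` has the edge after all
  apply hnadj
  rw [MixedGraph.adj, mtg_inr_inl ha,
    if_pos ((target_ne_isSome_iff hba).mpr ⟨hbout, by
      rcases hdisj with h | h
      · exact Or.inr h
      · exact Or.inl h⟩)]
  rfl

/-- Maximality of `Mt`. -/
lemma mtg_max (hM : M.IsIMAG) (hD : D ⊆ M.nodes) :
    ∀ x y : N ⊕ N, x ≠ y → x ∈ (MtG M D MA).nodes → y ∈ (MtG M D MA).nodes →
      ¬ (MtG M D MA).adj x y → ¬ (MtG M D MA).InducingPathBtw ∅ ∅ x y := by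
  have hwfM := hM.1.1
  have hwfMt : (MtG M D MA).WF := mtg_WF hM hD
  intro x y hne hx hy hnadj ⟨w, hP, hf, hl, hw⟩
  rw [first_def] at hf
  rw [last_def] at hl
  have hcol := inducing_colliders hw
  have hlen1 : 0 < w.len := by
    by_contra hcon
    have h0 : w.len = 0 := by omega
    rw [h0] at hl
    exact hne (by rw [← hf, hl])
  have hlen2 : 2 ≤ w.len := by
    by_contra hcon
    have h1 : w.len = 1 := by omega
    apply hnadj
    have h2 := w.hadj 0 hlen1
    rw [hf, show w.f 1 = y from by rw [← h1, hl]] at h2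
    exact h2
  have hInlInterior : ∀ i, 0 < i → i < w.len → ∃ z, w.f i = Sum.inl z := by
    intro i h1 h2
    have hc := (hcol i h1 h2).1
    cases hz : w.f i with
    | inl z => exact ⟨z, rfl⟩
    | inr z =>
      exfalso
      have h3 := hc.1
      rw [hz] at h3
      exact mtg_no_arrow_at_inr z _ h3
  cases x with
  | inr a =>
    have ha := mtg_nodes_inr hx
    cases y with
    | inr c =>
      obtain ⟨z, hz⟩ := hInlInterior 1 one_pos (by omega)
      have h3 := (hcol 1 one_pos (by omega)).2
      rw [first_def, last_def, hf, hl, hz] at h3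
      obtain ⟨t, ht, hanc⟩ := h3
      obtain ⟨v, rfl, _⟩ := mtg_anc_inl hM hanc
      simp only [Set.mem_union, Set.mem_insert_iff, Set.mem_singleton_iff] at ht
      rcases ht with (ht | ht) | ht
      · cases ht
      · cases ht
      · exact absurd ht (Set.notMem_empty _)
    | inl b' =>
      exact mtg_inr_walk hM hD ha hnadj w hP hf hl hw (mtg_nodes_inl hM hy)
  | inl u =>
    cases y with
    | inl v' =>
      have hInl : ∀ i, i ≤ w.len → ∃ z, w.f i = Sum.inl z := by
        intro i hi
        rcases Nat.eq_zero_or_pos i with rfl | h1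
        · exact ⟨u, hf⟩
        rcases eq_or_lt_of_le hi with he | hlt
        · exact ⟨v', by rw [he, hl]⟩
        · exact hInlInterior i h1 hlt
      have hadjQ : ∀ i, i < w.len →
          M.adj (Sum.elim id id (w.f i)) (Sum.elim id id (w.f (i + 1))) := by
        intro i hi
        obtain ⟨z0, hz0⟩ := hInl i (by omega)
        obtain ⟨z1, hz1⟩ := hInl (i + 1) (by omega)
        rw [proj_val hz0, proj_val hz1]
        have h3 := w.hadj i hi
        rw [hz0, hz1, MixedGraph.adj, mtg_inl_inl hM] at h3
        exact h3
      set Q : GWalk M := ⟨w.len, fun k => Sum.elim id id (w.f k), hadjQ⟩ with hQdef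
      have hQf : ∀ k, Q.f k = Sum.elim id id (w.f k) := fun _ => rfl
      have hQlen : Q.len = w.len := rfl
      apply hnadj
      have hadjM : M.adj u v' := by
        apply mag_adj_of_walk hM (fun he => hne (by rw [he]))
          (mtg_nodes_inl hM hx) (mtg_nodes_inl hM hy)
        refine ⟨Q, by rw [first_def, hQf, proj_val hf],
          by rw [last_def, hQlen, hQf, proj_val hl], ?_⟩
        apply mk_inducing
        intro i h1 h2
        rw [hQlen] at h2
        obtain ⟨z0, hz0⟩ := hInl (i - 1) (by omega)
        obtain ⟨z1, hz1⟩ := hInl i (by omega)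
        obtain ⟨z2, hz2⟩ := hInl (i + 1) (by omega)
        have hcoli := hcol i h1 h2
        refine ⟨⟨?_, ?_⟩, ?_⟩
        · rw [hQf, hQf, proj_val hz1, proj_val hz0]
          have h3 := hcoli.1.1
          rw [hz1, hz0, mtg_inl_inl hM] at h3
          exact h3
        · rw [hQf, hQf, proj_val hz1, proj_val hz2]
          have h3 := hcoli.1.2
          rw [hz1, hz2, mtg_inl_inl hM] at h3
          exact h3
        · rw [hQf, proj_val hz1, first_def, last_def, hQf, hQf, hQlen,
            proj_val hf, proj_val hl]
          have h3 := hcoli.2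
          rw [first_def, last_def, hf, hl, hz1] at h3
          exact mtg_ancSet_pair_inl hM h3
      rw [MixedGraph.adj, mtg_inl_inl hM]
      exact hadjM
    | inr a =>
      have ha := mtg_nodes_inr hy
      refine mtg_inr_walk hM hD ha ?_ (reverseW hwfMt w) (reverseW_isPath hwfMt hP)
        ?_ ?_ (inducing_reverse hwfMt hw) (mtg_nodes_inl hM hx)
      · intro hadj
        exact hnadj (adj_symm hwfMt hadj)
      · rw [reverseW_f, Nat.sub_zero, hl]
      · rw [reverseW_len, reverseW_f, Nat.sub_self, hf]


lemma mtg_inputs_cases {x : N ⊕ N} (h : x ∈ (MtG M D MA).inputs) :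
    (∃ i, x = Sum.inl i ∧ i ∈ M.inputs) ∨ (∃ a, x = Sum.inr a ∧ a ∈ D ∧ a ∉ M.inputs) := by
  rw [mtg_inputs, gg_inputs] at h
  rcases h with h | h
  · obtain ⟨i, hi, he⟩ := h
    exact Or.inl ⟨i, he.symm, hi⟩
  · obtain ⟨a, ha, he⟩ := h
    exact Or.inr ⟨a, he.symm, ha⟩

lemma mtg_isIMAG (hM : M.IsIMAG) (hD : D ⊆ M.nodes) : (MtG M D MA).IsIMAG := by
  have hwfM := hM.1.1
  refine ⟨⟨mtg_WF hM hD, ?_, ?_, ?_, ?_, ?_, mtg_max hM hD⟩,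
    fun x y => mtg_no_circle hM x y⟩
  · -- no arrowheads at input nodes
    intro x hxin y
    rcases mtg_inputs_cases hxin with ⟨i, rfl, hi⟩ | ⟨a, rfl, _⟩
    · cases y with
      | inl w =>
        rw [mtg_inl_inl hM]
        exact hM.1.2.1 i hi w
      | inr a =>
        by_cases ha : a ∈ D ∧ a ∉ M.inputs
        · intro harr
          have hne : i ≠ a := fun he => ha.2 (by rw [← he]; exact hi)
          obtain ⟨hout, _⟩ := mtg_inl_inr_ne_cases ha hne harr
          exact Set.disjoint_left.mp hwfM.1 hi hout
        · rw [mtg_inl_inr_not ha]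
          simp
    · exact mtg_no_arrow_at_inr a y
  · -- no edges between input nodes
    intro x hx y hy hadj
    rcases mtg_inputs_cases hx with ⟨i, rfl, hi⟩ | ⟨a, rfl, ha⟩
    · rcases mtg_inputs_cases hy with ⟨i', rfl, hi'⟩ | ⟨a, rfl, ha⟩
      · rw [MixedGraph.adj, mtg_inl_inl hM] at hadj
        exact hM.1.2.2.1 i hi i' hi' hadj
      · rw [MixedGraph.adj, mtg_inl_inr_ne ha (fun he => ha.2 (by rw [← he]; exact hi))] at hadj
        obtain ⟨hout, _⟩ := (target_ne_isSome_iff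
          (fun he => ha.2 (by rw [← he]; exact hi))).mp hadj
        exact Set.disjoint_left.mp hwfM.1 hi hout
    · rcases mtg_inputs_cases hy with ⟨i, rfl, hi⟩ | ⟨a', rfl, _⟩
      · rw [MixedGraph.adj, mtg_inr_inl ha] at hadj
        by_cases ht : (magSoftTarget (M.sumInl : MixedGraph (N ⊕ N)) a (Sum.inl i)).isSome
        · obtain ⟨hout, _⟩ := (target_ne_isSome_iff
            (fun he => ha.2 (by rw [← he]; exact hi))).mp ht
          exact Set.disjoint_left.mp hwfM.1 hi hout
        · rw [if_neg ht] at hadj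
          simp [MixedGraph.adj] at hadj
      · rw [MixedGraph.adj, mtg_inr_inr] at hadj
        simp at hadj
  · -- no directed cycles
    intro x y hdir hanc
    rcases mtg_dir_cases hM hdir with ⟨u, w, rfl, rfl, hd⟩ | ⟨a, v, rfl, rfl, _⟩
    · obtain ⟨z, he, hz⟩ := mtg_anc_inl hM hanc
      have : u = z := Sum.inl.inj he
      subst this
      exact hM.1.2.2.2.1 u w hd hz
    · cases mtg_anc_to_inr hM hanc
  · -- no almost directed cycles
    intro x y hanc hbid
    cases y with
    | inr a => exact mtg_no_arrow_at_inr a x hbid.1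
    | inl w =>
      cases x with
      | inr a => exact mtg_no_arrow_at_inr a (Sum.inl w) hbid.2
      | inl u =>
        have h1 := hbid.1
        have h2 := hbid.2
        rw [mtg_inl_inl hM] at h1 h2
        obtain ⟨z, he, hz⟩ := mtg_anc_inl hM hanc
        have : w = z := Sum.inl.inj he
        subst this
        exact hM.1.2.2.2.2.1 u w hz ⟨h1, h2⟩
  · -- no `a *→ b − c` configurations
    intro a b c harr hund
    obtain ⟨v, rfl, hcase⟩ := mtg_arrow_cases hM harr
    rcases mtg_undir_cases hM hund with
      ⟨v', w, hbv, hcw, hundM⟩ | ⟨v', hbv, hcv, hnoArr⟩ |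
      ⟨v', w, hbv, hcw, hvw, hundM⟩ | ⟨v', hbv, _⟩ | ⟨v', w, hbv, _⟩
    · have hv' : v = v' := Sum.inl.inj hbv
      rw [← hv'] at hundM
      rcases hcase with ⟨e, he⟩ | ⟨_, hnoU⟩
      · exact hM.1.2.2.2.2.2.1 e v w he hundM
      · exact hnoU ⟨w, hundM⟩
    · have hv' : v = v' := Sum.inl.inj hbv
      rw [← hv'] at hcv hnoArr
      rcases hcase with ⟨e, he⟩ | ⟨haeq, _⟩
      · exact hnoArr ⟨e, he⟩
      · rw [haeq] at harr
        have h1 := hund.1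
        rw [hcv, harr] at h1
        cases h1
    · have hv' : v = v' := Sum.inl.inj hbv
      rw [← hv'] at hundM
      rcases hcase with ⟨e, he⟩ | ⟨_, hnoU⟩
      · exact hM.1.2.2.2.2.2.1 e v w he ⟨hundM.2, hundM.1⟩
      · exact hnoU ⟨w, hundM.2, hundM.1⟩
    · cases hbv
    · cases hbv


lemma gd_ancSet_inr_singleton {u d : N} {S : Set N} :
    Sum.inl u ∈ (admgSoftManip AG DS).ancSet
        (({Sum.inr d} : Set (N ⊕ N)) ∪ Sum.inl '' S) ↔ u ∈ AG.ancSet S := by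
  constructor
  · rintro ⟨t, ht, hanc⟩
    obtain ⟨v, rfl, hv⟩ := gd_anc_inl hanc
    rcases ht with ht | ht
    · rw [Set.mem_singleton_iff] at ht
      cases ht
    · obtain ⟨s, hs, hsv⟩ := ht
      exact ⟨v, (Sum.inl.inj hsv) ▸ hs, hv⟩
  · rintro ⟨s, hs, hanc⟩
    exact ⟨Sum.inl s, Or.inr ⟨s, hs, rfl⟩, gd_anc_lift hanc⟩

/-- Every mark of `MA = MAG(A_{do})` is also a mark of `Mt`. -/
lemma subgraph_marks (hM : M.IsIMAG) {A : SADMG N} (hA : A.WF) (hrep : RepresentsS M A)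
    (hD : D ⊆ M.nodes) (hMA : MA.IsIMAG)
    (hrepMA : RepresentsS MA (A.softManip (D \ M.inputs))) :
    ∀ x y m, MA.mark x y = some m → (MtG M D MA).mark x y = some m := by
  have hwfMA := hMA.1.1
  have hwfM := hM.1.1
  have r4 := hrep.2.2.2.1
  have r5 := hrep.2.2.2.2
  have m3 := hrepMA.2.2.1
  have m4 := hrepMA.2.2.2.1
  have m5 := hrepMA.2.2.2.2
  have hAacy : ∀ a b : N, A.graph.dir a b → ¬ A.graph.anc b a := hA.1.2.2.1
  have hinputInl : ∀ u, Sum.inl u ∈ MA.inputs ↔ u ∈ M.inputs := by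
    intro u
    rw [hrepMA.1]
    constructor
    · rintro (⟨w, hw, he⟩ | ⟨w, _, he⟩)
      · rw [← hrep.1] at hw
        exact (Sum.inl.inj he) ▸ hw
      · cases he
    · intro h
      rw [hrep.1] at h
      exact Or.inl ⟨u, h, rfl⟩
  have hnodeInl : ∀ u, Sum.inl u ∈ MA.nodes → u ∈ M.nodes := by
    intro u h
    rcases h with h | h
    · exact Or.inl ((hinputInl u).mp h)
    · rw [hrepMA.2.1] at h
      obtain ⟨⟨w, hw, he⟩, hns⟩ := h
      have hwu : w = u := Sum.inl.inj he
      have : u ∈ A.obs := ⟨by rw [← hwu]; exact hw, fun hs => hns ⟨u, hs, rfl⟩⟩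
      rw [← hrep.2.1] at this
      exact Or.inr this
  have hnodeInr : ∀ a, Sum.inr a ∈ MA.nodes → a ∈ D ∧ a ∉ M.inputs := by
    intro a h
    rcases h with h | h
    · rw [hrepMA.1] at h
      rcases h with ⟨w, _, he⟩ | ⟨w, hw, he⟩
      · cases he
      · have hwa : w = a := Sum.inr.inj he
        subst hwa
        exact ⟨hw.1, hw.2⟩
    · rw [hrepMA.2.1] at h
      obtain ⟨⟨w, _, he⟩, _⟩ := h
      cases he
  have hinrInput : ∀ a, Sum.inr a ∈ MA.nodes → Sum.inr a ∈ MA.inputs := by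
    intro a h
    rcases h with h | h
    · exact h
    · exfalso
      rw [hrepMA.2.1] at h
      obtain ⟨⟨w, _, he⟩, _⟩ := h
      cases he
  intro x y m hm
  have hadjMA : MA.adj x y := adj_of_mark hm
  have hne : x ≠ y := ne_of_adj hwfMA hadjMA
  have hnodes := hwfMA.2.2.2.2.2 x y hadjMA
  -- the shared analysis for mixed pairs `{inr a, inl b}` with `b ≠ a`
  have mixed : ∀ a b, Sum.inr a ∈ MA.nodes → Sum.inl b ∈ MA.nodes →
      MA.adj (Sum.inr a) (Sum.inl b) → b ≠ a →
      (a ∈ D ∧ a ∉ M.inputs) ∧ b ∈ M.outputs ∧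
        (M.undir a b ∨ (M.dir a b ∧ ¬ M.VisibleCond a b)) := by
    intro a b hanode hbnode hadj hba
    have ha := hnodeInr a hanode
    have hain := hinrInput a hanode
    obtain ⟨hnb, hpath⟩ := (m3 (Sum.inr a) (Sum.inl b) (by simp) hanode hbnode).mp hadj
    have hbnotin : b ∉ M.inputs := fun hbin => hnb ⟨hain, (hinputInl b).mpr hbin⟩
    have hbnodeM : b ∈ M.nodes := hnodeInl b hbnode
    have hbout : b ∈ M.outputs := by
      rcases hbnodeM with h | h
      · exact absurd h hbnotin
      · exact h
    obtain ⟨wk, hP, hfw, hlw, hww⟩ := hpath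
    rw [first_def] at hfw
    rw [last_def] at hlw
    obtain ⟨P, hPlen, hP0, hPl, hPar, hPcol, hdanc⟩ :=
      gd_path_extract (AG := A.graph) (DS := D \ M.inputs) hba hP hfw hlw hww
    obtain ⟨_, hdisj⟩ := keyA hM hA hrep (fun he => hba he.symm) ha.2 hbnotin
      (hD ha.1) hbnodeM P hPlen hP0 hPl hPar hPcol hdanc
    exact ⟨ha, hbout, hdisj⟩
  cases x with
  | inl u =>
    cases y with
    | inl w =>
      -- both original nodes
      obtain ⟨hnb, hpath⟩ := (m3 _ _ hne hnodes.1 hnodes.2).mp hadjMA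
      obtain ⟨wk, hP, hfw, hlw, hww⟩ := hpath
      rw [first_def] at hfw
      rw [last_def] at hlw
      have hApath : A.graph.InducingPathBtw ∅ A.sel u w :=
        gd_path_extract_inl (AG := A.graph) (DS := D \ M.inputs) hP hfw hlw hww
      have hneuw : u ≠ w := fun he => hne (by rw [he])
      have hadjM : M.adj u w := by
        refine (hrep.2.2.1 u w hneuw (hnodeInl u hnodes.1) (hnodeInl w hnodes.2)).mpr
          ⟨?_, hApath⟩
        intro hb
        exact hnb ⟨(hinputInl u).mpr hb.1, (hinputInl w).mpr hb.2⟩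
      rw [mtg_inl_inl hM]
      cases m with
      | tail =>
        have hanc : u ∈ A.graph.ancSet ({w} ∪ A.sel) := gd_ancSet_inl.mp (m5 _ _ hm)
        rcases mark_cases hM.2 hadjM with h | h
        · exact h
        · exact absurd hanc (r4 u w h)
      | arrow =>
        have hnanc : u ∉ A.graph.ancSet ({w} ∪ A.sel) :=
          fun h => (m4 _ _ hm) (gd_ancSet_inl.mpr h)
        rcases mark_cases hM.2 hadjM with h | h
        · exact absurd (r5 u w h) hnanc
        · exact h
      | circle => exact absurd hm (hMA.2 _ _)
    | inr a =>
      -- `inl u − inr a`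
      have ha := hnodeInr a hnodes.2
      have hadj' : MA.adj (Sum.inr a) (Sum.inl u) := adj_symm hwfMA hadjMA
      by_cases hba : u = a
      · subst hba
        by_cases h1 : ∃ c, M.mark u c = some Mark.arrow
        · rw [mtg_self_arrowAt ha h1]
          cases m with
          | tail =>
            exfalso
            have hanc : u ∈ A.graph.ancSet A.sel :=
              gd_ancSet_inr_singleton.mp (m5 _ _ hm)
            obtain ⟨c, hc⟩ := h1
            exact (r4 u c hc) (ancSet_mono (fun t ht => Or.inr ht) hanc)
          | arrow => rfl
          | circle => exact absurd hm (hMA.2 _ _)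
        · by_cases h2 : ∃ c, M.undir u c
          · rw [mtg_self_undir ha h1 h2]
            cases m with
            | tail => rfl
            | arrow =>
              exfalso
              have hnanc : u ∉ A.graph.ancSet A.sel :=
                fun h => (m4 _ _ hm) (gd_ancSet_inr_singleton.mpr h)
              obtain ⟨c, hc⟩ := h2
              have huc : u ≠ c := by
                intro he
                have hcc := hc.1
                rw [he, hwfM.2.2.2.2.1 c] at hcc
                cases hcc
              have h3 := r5 u c hc.1
              have h4 := r5 c u hc.2
              obtain ⟨t, ht, hanc⟩ := h3
              rcases ht with ht | ht
              · rw [Set.mem_singleton_iff] at ht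
                subst ht
                obtain ⟨t', ht', hanc'⟩ := h4
                rcases ht' with ht' | ht'
                · rw [Set.mem_singleton_iff] at ht'
                  subst ht'
                  exact huc (anc_antisymm hA.1.2.2.1 hanc hanc')
                · exact hnanc ⟨t', ht', hanc.trans hanc'⟩
              · exact hnanc ⟨t, ht, hanc⟩
            | circle => exact absurd hm (hMA.2 _ _)
          · rw [mtg_self_circle ha h1 h2]
            cases m with
            | tail => rw [if_pos hm]
            | arrow =>
              rw [if_neg (by rw [hm]; simp)]
            | circle => exact absurd hm (hMA.2 _ _)
      · obtain ⟨_, hbout, hdisj⟩ := mixed a u hnodes.2 hnodes.1 hadj' hba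
        rw [mtg_inl_inr_ne ha hba]
        rcases hdisj with hund | ⟨hdir, hinv⟩
        · rw [(target_ne_tail_iff hba).mpr ⟨hbout, hund⟩]
          cases m with
          | tail => rfl
          | arrow =>
            exfalso
            have hnanc : u ∉ A.graph.ancSet A.sel :=
              fun h => (m4 _ _ hm) (gd_ancSet_inr_singleton.mpr h)
            have h3 := r5 u a hund.2
            have h4 := r5 a u hund.1
            obtain ⟨t, ht, hanc⟩ := h3
            rcases ht with ht | ht
            · rw [Set.mem_singleton_iff] at ht
              subst ht
              obtain ⟨t', ht', hanc'⟩ := h4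
              rcases ht' with ht' | ht'
              · rw [Set.mem_singleton_iff] at ht'
                subst ht'
                exact hba (anc_antisymm hA.1.2.2.1 hanc hanc')
              · exact hnanc ⟨t', ht', hanc.trans hanc'⟩
            · exact hnanc ⟨t, ht, hanc⟩
          | circle => exact absurd hm (hMA.2 _ _)
        · rw [(target_ne_arrow_iff hba).mpr ⟨hbout, hdir, hinv⟩]
          cases m with
          | tail =>
            exfalso
            have hanc : u ∈ A.graph.ancSet A.sel :=
              gd_ancSet_inr_singleton.mp (m5 _ _ hm)
            exact (r4 u a hdir.2) (ancSet_mono (fun t ht => Or.inr ht) hanc)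
          | arrow => rfl
          | circle => exact absurd hm (hMA.2 _ _)
  | inr a =>
    cases y with
    | inl b =>
      have ha := hnodeInr a hnodes.1
      have hain := hinrInput a hnodes.1
      -- the mark at an input node is a tail
      have hmt : m = Mark.tail := by
        cases m with
        | tail => rfl
        | arrow => exact absurd hm (hMA.1.2.1 _ hain (Sum.inl b))
        | circle => exact absurd hm (hMA.2 _ _)
      subst hmt
      rw [mtg_inr_inl ha]
      by_cases hba : b = a
      · subst hba
        rw [if_pos (target_self_isSome M b)]
      · obtain ⟨_, hbout, hdisj⟩ := mixed a b hnodes.1 hnodes.2 hadjMA hba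
        rw [if_pos ((target_ne_isSome_iff hba).mpr ⟨hbout, by
          rcases hdisj with h | h
          · exact Or.inr h
          · exact Or.inl h⟩)]
    | inr c =>
      exfalso
      obtain ⟨hnb, _⟩ := (m3 _ _ hne hnodes.1 hnodes.2).mp hadjMA
      exact hnb ⟨hinrInput a hnodes.1, hinrInput c hnodes.2⟩

end Stmt9

/-- Let `M` be an iMAG and `D ⊆ I ∪ V`.  Then for every isADMG
`A ∈ [M]_G` there exists an iMAG `M̃ ∈ [M_{do(I_D)}]_M` such that
`MAG(A_{do(I_D)})` is a subgraph of `M̃`. -/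
theorem statement9 {N : Type} [Infinite N] (M : MixedGraph N) (hM : M.IsIMAG)
    (D : Set N) (hD : D ⊆ M.nodes) :
    ∀ A : SADMG N, A.WF → RepresentsS M A →
      ∀ MA : MixedGraph (N ⊕ N), MA.IsIMAG →
        RepresentsS MA (A.softManip (D \ M.inputs)) →
        ∃ Mt : MixedGraph (N ⊕ N), Mt.IsIMAG ∧
          (∀ A' : SADMG (N ⊕ N), A'.WF → RepresentsS Mt A' →
            RepresentsS (magSoftManip M D) A') ∧
          MA.Subgraph Mt := by
  intro A hA hrep MA hMA hrepMA
  refine ⟨Stmt9.MtG M D MA, Stmt9.mtg_isIMAG hM hD, ?_, ?_, ?_,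
    Stmt9.subgraph_marks hM hA hrep hD hMA hrepMA⟩
  · intro A' _ hr
    obtain ⟨q1, q2, q3, q4, q5⟩ := hr
    exact ⟨q1, q2,
      fun a b hne ha hb => ((Stmt9.mtg_adj_iff a b).symm.trans (q3 a b hne ha hb)),
      fun a b h => q4 a b (Stmt9.mtg_arrow_of h),
      fun a b h => q5 a b (Stmt9.mtg_tail_of h)⟩
  · intro x hx
    rw [hrepMA.1] at hx
    rcases hx with ⟨u, hu, rfl⟩ | ⟨a, haDS, rfl⟩
    · rw [Stmt9.mtg_inputs, Stmt9.gg_inputs]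
      rw [← hrep.1] at hu
      exact Or.inl ⟨u, hu, rfl⟩
    · exact Stmt9.mem_mtg_inputs_inr ⟨haDS.1, haDS.2⟩
  · intro x hx
    rw [hrepMA.2.1] at hx
    obtain ⟨⟨u, hu, rfl⟩, hns⟩ := hx
    rw [Stmt9.mtg_outputs, Stmt9.gg_outputs]
    have hobs : u ∈ A.obs := ⟨hu, fun hs => hns ⟨u, hs, rfl⟩⟩
    rw [← hrep.2.1] at hobs
    exact ⟨u, hobs, rfl⟩

end
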